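/- arXiv:1309.6477 — 6 statements merged into one kernel-verified Lean document; each statement's English description precedes it below -/
import Mathlib

section
/- For every integer x ≥ 2 and every ε with 0 < ε < min(1/x, 1 − 1/x), the competitive ratio of DNF restricted to input sequences with all item sizes in [1/x − ε, 1/x + ε] is at most x/(x+1). -/
open Filter MeasureTheory

/-- A valid bin covering input: all item sizes lie strictly between 0 and 1. -/
def validInput (I : List ℝ) : Prop := ∀ x ∈ I, 0 < x ∧ x < 1

/-- The total volume (sum of item sizes) of an input sequence. -/
def vol (I : List ℝ) : ℝ := I.sum

/-- One step of Dual Next-Fit: the state is the level of the open bin (0 if none)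
together with the number of covered (closed) bins so far. -/
noncomputable def dnfStep (s : ℝ × ℕ) (x : ℝ) : ℝ × ℕ :=
  if 1 ≤ s.1 + x then (0, s.2 + 1) else (s.1 + x, s.2)

/-- The number of bins covered by Dual Next-Fit on input `I`. -/
noncomputable def dnfCount (I : List ℝ) : ℕ := (I.foldl dnfStep (0, 0)).2

/-- The number of bins covered by the Dual Harmonic algorithm `DH_k` on input `I`:
items in `[1/j, 1/(j-1))` (for `2 ≤ j ≤ k`) are packed `j` to a bin, and items
in `(0, 1/k)` are packed in Next-Fit fashion in separate bins. -/
noncomputable def dhCount (k : ℕ) (I : List ℝ) : ℕ :=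
  (∑ j ∈ Finset.Icc 2 k,
      (I.countP fun x => decide ((1:ℝ)/(j:ℝ) ≤ x ∧ x < 1/((j:ℝ)-1))) / j)
  + dnfCount (I.filter fun x => decide (x < 1/(k:ℝ)))

/-- The optimal (offline) number of covered bins: the maximum, over all assignments
of the items of `I` to bins, of the number of bins receiving total size at least 1. -/
noncomputable def optCount (I : List ℝ) : ℕ :=
  Finset.sup Finset.univ (fun f : Fin I.length → Fin I.length =>
    (Finset.univ.filter fun b : Fin I.length =>
      1 ≤ ∑ i ∈ Finset.univ.filter (fun i => f i = b), I.get i).card)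

/-- The competitive ratio of the algorithm `A` restricted to input sequences with
all item sizes in `S`: the supremum of all `c` such that for some constant `b`,
`A I ≥ c·Opt I + b` for all such inputs. -/
noncomputable def CRrestricted (S : Set ℝ) (A : List ℝ → ℕ) : ℝ :=
  sSup {c : ℝ | ∃ b : ℝ, ∀ I : List ℝ, (∀ x ∈ I, x ∈ S) →
    c * (optCount I : ℝ) + b ≤ (A I : ℝ)}

/-- `A`'s performance on a worst permutation of `I`. -/
noncomputable def worstOf (A : List ℝ → ℕ) (I : List ℝ) : ℕ :=
  (I.permutations.map A).foldr min (A I)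

/-- The expected performance of `A` on a uniformly random permutation of `I`. -/
noncomputable def expPerm (A : List ℝ → ℕ) (I : List ℝ) : ℝ :=
  (∑ σ : Equiv.Perm (Fin I.length), (A (List.ofFn fun i => I.get (σ i)) : ℝ)) /
    ((I.length).factorial : ℝ)

/-- `liminf_{v→∞} inf { A(I)/v : vol I = v, items of I in S }`. -/
noncomputable def minRate (S : Set ℝ) (A : List ℝ → ℕ) : ℝ :=
  Filter.liminf (fun v : ℝ =>
    sInf {r : ℝ | ∃ I : List ℝ, (∀ x ∈ I, x ∈ S) ∧ vol I = v ∧ r = (A I : ℝ) / v})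
    Filter.atTop

/-- Expected performance of `A` on `n` items drawn independently and uniformly from `(0,1)`. -/
noncomputable def unifE (A : List ℝ → ℕ) (n : ℕ) : ℝ :=
  ∫ x : Fin n → ℝ, (A (List.ofFn x) : ℝ)
    ∂(Measure.pi fun _ : Fin n => volume.restrict (Set.Ioo (0:ℝ) 1))

/-- Expected performance of `A` on `n` independent items, each of size `ε` with
probability 1/2 and size `1-ε` with probability 1/2. -/
noncomputable def bernE (A : List ℝ → ℕ) (n : ℕ) (ε : ℝ) : ℝ :=
  (∑ f : Fin n → Bool, (A (List.ofFn fun i => if f i then ε else 1 - ε) : ℝ)) / 2^n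

/-- One step of a reasonable online algorithm with decision function `f`:
the accumulator records (history of items seen, levels of the open bins, number of
covered bins).  On item `x`, the algorithm places `x` in the open bin of index
`f hist x` (a new bin is opened if the index is out of range); a bin is closed
exactly when its content reaches 1. -/
noncomputable def algStep (f : List ℝ → ℝ → ℕ) (acc : List ℝ × List ℝ × ℕ) (x : ℝ) :
    List ℝ × List ℝ × ℕ :=
  let hist := acc.1
  let s := acc.2.1
  let c := acc.2.2
  let i := f hist x
  if h : i < s.length then
    if 1 ≤ s.get ⟨i, h⟩ + x then (hist ++ [x], s.eraseIdx i, c + 1)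
    else (hist ++ [x], s.set i (s.get ⟨i, h⟩ + x), c)
  else
    if 1 ≤ x then (hist ++ [x], s, c + 1)
    else (hist ++ [x], s ++ [x], c)

/-- Running the reasonable online algorithm with decision function `f` on input `I`. -/
noncomputable def runAlg (f : List ℝ → ℝ → ℕ) (I : List ℝ) : List ℝ × List ℝ × ℕ :=
  I.foldl (algStep f) ([], [], 0)

/-!
A round `a^(x-1) b c` with `a = 1/x + ε/(2x)`, `b = 1/x - ε/2`, `c = 1/x + ε` keeps the open bin
of Dual Next-Fit just below `1` until `c` arrives, so DNF covers exactly one bin per round. An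
optimal packing instead covers one bin with `a^(x-2) b c` from each round and pools the spare
`a`s, `x` to a bin (`x a ≥ 1`): over `m x` rounds that is `m (x + 1)` bins against DNF's `m x`.
-/

theorem foldl_dnfStep_of_add_sum_lt {R : List ℝ} (hR : ∀ a ∈ R, 0 ≤ a) {t : ℝ}
    (ht : t + R.sum < 1) (k : ℕ) : R.foldl dnfStep (t, k) = (t + R.sum, k) := by
  induction R generalizing t with
  | nil => simp
  | cons a R ih =>
    have ha := hR a List.mem_cons_self
    have hR' : ∀ b ∈ R, 0 ≤ b := fun b hb => hR b (List.mem_cons_of_mem a hb)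
    have hsum : 0 ≤ R.sum := List.sum_nonneg hR'
    rw [List.sum_cons] at ht ⊢
    rw [List.foldl_cons, dnfStep, if_neg (by linarith), ih hR' (by linarith), add_assoc]

theorem foldl_dnfStep_append_singleton {R : List ℝ} (hR : ∀ a ∈ R, 0 ≤ a) {c : ℝ}
    (hlt : R.sum < 1) (hge : 1 ≤ R.sum + c) (k : ℕ) :
    (R ++ [c]).foldl dnfStep (0, k) = (0, k + 1) := by
  rw [List.foldl_append, foldl_dnfStep_of_add_sum_lt hR (by linarith), zero_add]
  simp [dnfStep, hge]

theorem foldl_dnfStep_flatten {L : List (List ℝ)}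
    (hL : ∀ R ∈ L, ∀ k, R.foldl dnfStep (0, k) = (0, k + 1)) (k : ℕ) :
    L.flatten.foldl dnfStep (0, k) = (0, k + L.length) := by
  induction L generalizing k with
  | nil => simp
  | cons R L ih =>
    rw [List.flatten_cons, List.foldl_append, hL R List.mem_cons_self,
      ih (fun R' hR' => hL R' (List.mem_cons_of_mem R hR')), List.length_cons, add_assoc,
      add_comm 1]

theorem ofFn_get_snd_finProdFinEquiv_symm {α : Type*} (R : List α) (n : ℕ) :
    List.ofFn (fun p : Fin (n * R.length) => R.get (finProdFinEquiv.symm p).2) =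
      (List.replicate n R).flatten := by
  rw [List.ofFn_mul]
  congr 1
  simp [finProdFinEquiv_symm_apply, Fin.modNat, Nat.mod_eq_of_lt, List.ofFn_const]

theorem card_le_optCount {ι κ : Type*} [Fintype ι] [Fintype κ] [DecidableEq κ] {N : ℕ}
    (e : Fin N ≃ ι) (v : ι → ℝ) (g : ι → κ) (hg : ∀ b, 1 ≤ ∑ i with g i = b, v i) :
    Fintype.card κ ≤ optCount (List.ofFn (v ∘ e)) := by
  set I := List.ofFn (v ∘ e)
  have hlen : I.length = N := List.length_ofFn
  have hg_surj : Function.Surjective g := by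
    intro b
    by_contra! hb
    have : ∑ i with g i = b, v i = 0 := by simp [hb]
    linarith [hg b]
  have hcard : Fintype.card κ ≤ I.length := by
    simpa [hlen, Fintype.card_congr e.symm] using Fintype.card_le_of_surjective g hg_surj
  let bin : κ ↪ Fin I.length := (Fintype.equivFin κ).toEmbedding.trans (Fin.castLEEmb hcard)
  let item : Fin I.length ≃ ι := (finCongr hlen).trans e
  let f : Fin I.length → Fin I.length := fun i => bin (g (item i))
  have hcovered : ∀ b, 1 ≤ ∑ i with f i = bin b, I.get i := by
    intro b
    convert hg b using 1
    refine Finset.sum_equiv item (by simp [f]) (fun i _ => ?_)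
    simp only [I, List.get_ofFn]
    rfl
  calc Fintype.card κ = (Finset.univ.map bin).card := by simp
    _ ≤ (Finset.univ.filter fun b => 1 ≤ ∑ i with f i = b, I.get i).card := by
      refine Finset.card_le_card fun b hb => ?_
      obtain ⟨b, -, rfl⟩ := Finset.mem_map.mp hb
      simpa using hcovered b
    _ ≤ optCount I := Finset.le_sup (f := fun f : Fin I.length → Fin I.length =>
        (Finset.univ.filter fun b => 1 ≤ ∑ i with f i = b, I.get i).card) (Finset.mem_univ f)

theorem CRrestricted_le_div {S : Set ℝ} {A : List ℝ → ℕ} {p q : ℕ} (hq : 0 < q)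
    (h : ∀ m : ℕ, ∃ I : List ℝ, (∀ z ∈ I, z ∈ S) ∧ A I ≤ m * p ∧ m * q ≤ optCount I) :
    CRrestricted S A ≤ p / q := by
  refine Real.sSup_le (fun c ⟨β, hβ⟩ => ?_) (by positivity)
  by_contra! hc
  have hc0 : 0 < c := lt_of_le_of_lt (by positivity) hc
  have hgap : 0 < c * q - p := by rw [div_lt_iff₀ (by positivity)] at hc; linarith
  have hbounded : ∀ m : ℕ, m * (c * q - p) ≤ -β := by
    intro m
    obtain ⟨I, hIS, hA, hopt⟩ := h m
    have hA' : (A I : ℝ) ≤ m * p := by exact_mod_cast hA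
    have hopt' : (m * q : ℝ) ≤ optCount I := by exact_mod_cast hopt
    nlinarith [hβ I hIS]
  obtain ⟨m, hm⟩ := exists_nat_gt (-β / (c * q - p))
  rw [div_lt_iff₀ hgap] at hm
  linarith [hbounded m]

theorem dnfCount_flatten_replicate {R : List ℝ}
    (hR : ∀ k, R.foldl dnfStep (0, k) = (0, k + 1)) (n : ℕ) :
    dnfCount (List.replicate n R).flatten = n := by
  rw [dnfCount, foldl_dnfStep_flatten fun R' hR' => List.eq_of_mem_replicate hR' ▸ hR]
  simp

theorem le_optCount_flatten_replicate_cons {a : ℝ} {T : List ℝ} {x : ℕ} (hpool : 1 ≤ x * a)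
    (hT : 1 ≤ T.sum) (m : ℕ) :
    m * (x + 1) ≤ optCount (List.replicate (m * x) (a :: T)).flatten := by
  set R := a :: T
  let e : Fin (m * x * R.length) ≃ (Fin m × Fin x) × Fin R.length :=
    finProdFinEquiv.symm.trans (Equiv.prodCongr finProdFinEquiv.symm (Equiv.refl _))
  let v : (Fin m × Fin x) × Fin R.length → ℝ := fun i => R.get i.2
  -- Item `j` of round `t` of group `q` goes to bin `(q, t + 1)`, except the leading `a` of
  -- each round, which goes to the pool bin `(q, 0)`.
  let g : (Fin m × Fin x) × Fin R.length → Fin m × Fin (x + 1) :=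
    fun i => (i.1.1, if (i.2 : ℕ) = 0 then 0 else i.1.2.succ)
  have hI : List.ofFn (v ∘ e) = (List.replicate (m * x) R).flatten :=
    ofFn_get_snd_finProdFinEquiv_symm R (m * x)
  have hg : ∀ l, 1 ≤ ∑ i with g i = l, v i := by
    rintro ⟨q, l⟩
    rw [Finset.sum_filter, Fintype.sum_prod_type, Fintype.sum_prod_type]
    cases l using Fin.cases with
    | zero => simpa [g, v, Fin.sum_univ_succ, R] using hpool
    | succ s => simpa [g, v, Fin.sum_univ_succ, R, (Fin.succ_ne_zero s).symm, ite_and] using hT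
  simpa [hI] using card_le_optCount e v g hg

theorem exists_dnf_hard_input {x : ℕ} (hx : 2 ≤ x) {a b c : ℝ} (ha : 0 ≤ a) (hb : 0 ≤ b)
    (hround : (x - 1) * a + b < 1) (hshort : 1 ≤ (x - 2) * a + b + c) (hpool : 1 ≤ x * a)
    (m : ℕ) : ∃ I : List ℝ, (∀ z ∈ I, z = a ∨ z = b ∨ z = c) ∧
      dnfCount I = m * x ∧ m * (x + 1) ≤ optCount I := by
  set P := a :: List.replicate (x - 2) a ++ [b]
  have hP : ∀ z ∈ P, z = a ∨ z = b := by
    simp only [P, List.cons_append, List.mem_cons, List.mem_append, List.mem_replicate,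
      List.not_mem_nil, or_false]
    rintro z (rfl | ⟨-, rfl⟩ | rfl) <;> simp
  have hPsum : P.sum = (x - 1) * a + b := by
    simp only [P, List.cons_append, List.sum_cons, List.sum_append, List.sum_replicate,
      nsmul_eq_mul, Nat.cast_sub hx, Nat.cast_ofNat, List.sum_nil]
    ring
  have hround_dnf : ∀ k, (P ++ [c]).foldl dnfStep (0, k) = (0, k + 1) :=
    foldl_dnfStep_append_singleton (fun z hz => by rcases hP z hz with rfl | rfl <;> assumption)
      (hPsum ▸ hround) (by rw [hPsum]; linarith)
  have hround_eq : P ++ [c] = a :: (List.replicate (x - 2) a ++ [b, c]) := by simp [P]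
  refine ⟨(List.replicate (m * x) (P ++ [c])).flatten, fun z hz => ?_,
    dnfCount_flatten_replicate hround_dnf _, ?_⟩
  · obtain ⟨_, hl, hz⟩ := List.mem_flatten.mp hz
    rw [List.eq_of_mem_replicate hl, List.mem_append, List.mem_singleton] at hz
    rcases hz with hz | rfl
    · rcases hP z hz with rfl | rfl <;> simp
    · simp
  · rw [hround_eq]
    refine le_optCount_flatten_replicate_cons hpool ?_ m
    simpa [Nat.cast_sub hx, add_assoc] using hshort

theorem exists_dnf_hard_input_Icc {x : ℕ} (hx : 2 ≤ x) {ε : ℝ} (hε : 0 < ε)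
    (hεx : ε < 1 / x) (m : ℕ) :
    ∃ I : List ℝ, (∀ z ∈ I, z ∈ Set.Icc (1 / (x : ℝ) - ε) (1 / x + ε)) ∧
      dnfCount I = m * x ∧ m * (x + 1) ≤ optCount I := by
  have hx1 : (1 : ℝ) ≤ x := by exact_mod_cast (by omega : 1 ≤ x)
  have hx0 : (0 : ℝ) < x := by linarith
  have hsmall : ε / (2 * x) ≤ ε := div_le_self hε.le (by linarith)
  obtain ⟨I, hmem, hdnf, hopt⟩ :=
    exists_dnf_hard_input (a := 1 / x + ε / (2 * x)) (b := 1 / x - ε / 2) (c := 1 / x + ε) hx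
      (by positivity) (by linarith) (by field_simp; linarith) (by field_simp; nlinarith)
      (by field_simp; linarith) m
  refine ⟨I, fun z hz => ?_, hdnf, hopt⟩
  have hpos : 0 ≤ ε / (2 * x) := by positivity
  rcases hmem z hz with rfl | rfl | rfl <;> constructor <;> linarith

/-- For every integer `x ≥ 2` and every `ε` with `0 < ε < min (1/x) (1 - 1/x)`,
the competitive ratio of DNF restricted to item sizes in `[1/x - ε, 1/x + ε]`
is at most `x/(x+1)`. -/
theorem dnf_restricted_CR_le (x : ℕ) (hx : 2 ≤ x) (ε : ℝ) (hε : 0 < ε)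
    (hε' : ε < min (1/(x:ℝ)) (1 - 1/(x:ℝ))) :
    CRrestricted (Set.Icc (1/(x:ℝ) - ε) (1/(x:ℝ) + ε)) dnfCount ≤ (x:ℝ)/((x:ℝ)+1) := by
  have hεx : ε < 1 / x := (lt_min_iff.mp hε').1
  convert CRrestricted_le_div (p := x) (q := x + 1) x.succ_pos fun m => ?_ using 1
  · push_cast; rfl
  obtain ⟨I, hIS, hdnf, hopt⟩ := exists_dnf_hard_input_Icc hx hε hεx m
  exact ⟨I, hIS, hdnf.le, hopt⟩
end

section
/- Let p ≥ 2 be an integer and (a,b) ⊆ (0,1) an interval with 1/(p+1) ≤ a < 1/p < b such that 1/p is the only point of the form 1/l (l ≥ 2 an integer) contained in (a,b). Then the competitive ratio of DNF restricted to input sequences with all item sizes in (a,b) equals p/(p+1). -/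
open Filter MeasureTheory

/-!
Items larger than `1/(p+1)` make Dual Next-Fit close a bin after at most `p + 1` items, and
items smaller than `1/(p-1)` force every covered bin of any packing to hold at least `p` items;
counting items both ways gives `DNF ≥ p/(p+1) · Opt - 1`.

For the converse, round `r` of the adversary consists of `p - 1` small items `1/p - ε/2^r`
followed by two large items `1/p + (p-1) ε/2^(r+1)`, and Dual Next-Fit covers exactly one bin per
round. Offline, the first large item of round `r` together with the small items of round `r + 1`
fills a bin exactly, and the second large items cover a bin `p` at a time, so `pM + 1` rounds
have `Opt ≥ (p+1) M` while Dual Next-Fit covers `pM + 1` bins.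
-/

open Finset

theorem Finset.sum_lt_one_of_card_le {ι : Type*} {s : Finset ι} {w : ι → ℝ} {k : ℕ}
    (hw : ∀ i ∈ s, k * w i < 1) (hs : #s ≤ k) : ∑ i ∈ s, w i < 1 := by
  rcases s.eq_empty_or_nonempty with rfl | hne
  · simp
  have hk : (0 : ℝ) < k := by exact_mod_cast hne.card_pos.trans_le hs
  have : k * ∑ i ∈ s, w i < k := by
    calc k * ∑ i ∈ s, w i = ∑ i ∈ s, k * w i := mul_sum ..
    _ < ∑ i ∈ s, 1 := sum_lt_sum_of_nonempty hne hw
    _ ≤ k := by simpa using hs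
  nlinarith

section Optimum

variable {ι κ : Type*} [Fintype ι] [DecidableEq ι] [Fintype κ] [DecidableEq κ]

noncomputable def coveredBins (w : ι → ℝ) (f : ι → ι) : Finset ι :=
  {b | 1 ≤ ∑ i with f i = b, w i}

noncomputable def optOf (w : ι → ℝ) : ℕ :=
  univ.sup fun f : ι → ι => #(coveredBins w f)

theorem optCount_eq_optOf (I : List ℝ) : optCount I = optOf I.get := rfl

theorem card_coveredBins_le_optOf (w : ι → ℝ) (f : ι → ι) : #(coveredBins w f) ≤ optOf w :=
  le_sup (f := fun f => #(coveredBins w f)) (mem_univ f)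

theorem exists_optOf_eq_card (w : ι → ℝ) : ∃ f : ι → ι, optOf w = #(coveredBins w f) := by
  obtain ⟨f, -, hf⟩ := exists_mem_eq_sup univ ⟨id, mem_univ _⟩ fun f : ι → ι => #(coveredBins w f)
  exact ⟨f, hf⟩

theorem coveredBins_comp_equiv (w : ι → ℝ) (e : κ ≃ ι) (f : ι → ι) :
    coveredBins (w ∘ e) (e.symm ∘ f ∘ e) = (coveredBins w f).map e.symm.toEmbedding := by
  ext k
  simp only [coveredBins, mem_filter, mem_univ, true_and, mem_map_equiv, Equiv.symm_symm,
    Function.comp_apply, Equiv.symm_apply_eq, sum_filter]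
  rw [e.sum_comp (fun i => if f i = e k then w i else 0)]

theorem optOf_le_optOf_comp_equiv (w : ι → ℝ) (e : κ ≃ ι) : optOf w ≤ optOf (w ∘ e) :=
  Finset.sup_le fun f _ => by
    simpa [coveredBins_comp_equiv] using card_coveredBins_le_optOf (w ∘ e) (e.symm ∘ f ∘ e)

theorem optOf_comp_equiv (w : ι → ℝ) (e : κ ≃ ι) : optOf (w ∘ e) = optOf w :=
  le_antisymm (by simpa [Function.comp_assoc] using optOf_le_optOf_comp_equiv (w ∘ e) e.symm)
    (optOf_le_optOf_comp_equiv w e)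

theorem coveredBins_sumElim (w : ι → ℝ) (v : κ → ℝ) (f : ι → ι) (g : κ → κ) :
    coveredBins (Sum.elim w v) (Sum.map f g) = (coveredBins w f).disjSum (coveredBins v g) := by
  ext (b | b) <;> simp [coveredBins, sum_filter, Fintype.sum_sum_type]

theorem optOf_add_optOf_le (w : ι → ℝ) (v : κ → ℝ) : optOf w + optOf v ≤ optOf (Sum.elim w v) := by
  obtain ⟨f, hf⟩ := exists_optOf_eq_card w
  obtain ⟨g, hg⟩ := exists_optOf_eq_card v
  rw [hf, hg, ← card_disjSum, ← coveredBins_sumElim]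
  exact card_coveredBins_le_optOf _ _

theorem one_le_optOf (w : ι → ℝ) (h : 1 ≤ ∑ i, w i) : 1 ≤ optOf w := by
  obtain ⟨b⟩ : Nonempty ι := by
    by_contra hι
    rw [not_nonempty_iff] at hι
    simp only [univ_eq_empty, sum_empty] at h
    linarith
  refine le_trans ?_ (card_coveredBins_le_optOf w fun _ => b)
  exact card_pos.mpr ⟨b, by simpa [coveredBins] using h⟩

theorem succ_mul_optOf_le_card {w : ι → ℝ} {k : ℕ}
    (hw : ∀ i, k * w i < 1) : (k + 1) * optOf w ≤ Fintype.card ι := by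
  obtain ⟨f, hf⟩ := exists_optOf_eq_card w
  rw [hf]
  have hfiber : ∀ b ∈ coveredBins w f, k + 1 ≤ #{i | f i = b} := fun b hb => by
    by_contra! h
    have := sum_lt_one_of_card_le (fun i _ => hw i) (Nat.lt_succ_iff.mp h)
    simp only [coveredBins, mem_filter, mem_univ, true_and] at hb
    linarith
  calc (k + 1) * #(coveredBins w f)
      ≤ #{i | f i ∈ coveredBins w f} :=
        mul_card_image_le_card_of_maps_to (fun i hi => (mem_filter.mp hi).2) _ fun b hb =>
          (hfiber b hb).trans (card_le_card fun i hi => by simp_all)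
    _ ≤ Fintype.card ι := card_le_univ _

end Optimum

theorem List.Perm.exists_equiv_getElem {α : Type*} {l₁ l₂ : List α} (h : l₁.Perm l₂) :
    ∃ e : Fin l₁.length ≃ Fin l₂.length, ∀ i, l₂[e i] = l₁[i] := by
  induction h with
  | nil => exact ⟨Equiv.refl _, fun _ => rfl⟩
  | cons x _ ih =>
    obtain ⟨e, he⟩ := ih
    refine ⟨(finSuccEquiv _).trans (e.optionCongr.trans (finSuccEquiv _).symm), fun i => ?_⟩
    cases i using Fin.cases
    · simp
    · simpa using he _
  | swap x y l =>
    refine ⟨Equiv.swap 0 1, fun i => ?_⟩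
    rcases i with ⟨_ | _ | i, hi⟩ <;> simp [Equiv.swap_apply_of_ne_of_ne, Fin.ext_iff]
  | trans _ _ ih₁ ih₂ =>
    obtain ⟨e₁, he₁⟩ := ih₁
    obtain ⟨e₂, he₂⟩ := ih₂
    exact ⟨e₁.trans e₂, fun i => (he₂ _).trans (he₁ i)⟩

theorem optCount_perm {L L' : List ℝ} (h : L.Perm L') : optCount L = optCount L' := by
  obtain ⟨e, he⟩ := h.exists_equiv_getElem
  have hget : L'.get ∘ e = L.get := funext fun i => he i
  rw [optCount_eq_optOf, optCount_eq_optOf, ← hget, optOf_comp_equiv]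

theorem optCount_add_optCount_le (L L' : List ℝ) :
    optCount L + optCount L' ≤ optCount (L ++ L') := by
  let e : Fin L.length ⊕ Fin L'.length ≃ Fin (L ++ L').length :=
    finSumFinEquiv.trans (finCongr List.length_append.symm)
  have hget : (L ++ L').get ∘ e = Sum.elim L.get L'.get := by
    funext x
    rcases x with i | i <;> simp [e, List.getElem_append_left, List.getElem_append_right]
  rw [optCount_eq_optOf, optCount_eq_optOf, optCount_eq_optOf, ← optOf_comp_equiv _ e, hget]
  exact optOf_add_optOf_le _ _

theorem optCount_le_append_left (L L' : List ℝ) : optCount L' ≤ optCount (L ++ L') :=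
  (Nat.le_add_left _ _).trans (optCount_add_optCount_le L L')

theorem one_le_optCount {L : List ℝ} (h : 1 ≤ L.sum) : 1 ≤ optCount L :=
  one_le_optOf _ (by simpa [Fin.sum_univ_getElem] using h)

theorem length_le_optCount_flatten (Ls : List (List ℝ)) (h : ∀ L ∈ Ls, 1 ≤ L.sum) :
    Ls.length ≤ optCount Ls.flatten := by
  induction Ls with
  | nil => simp
  | cons L Ls ih =>
    have hL := one_le_optCount (h L List.mem_cons_self)
    have hLs := ih fun L' hL' => h L' (List.mem_cons_of_mem L hL')
    have := optCount_add_optCount_le L Ls.flatten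
    simp only [List.length_cons, List.flatten_cons]
    omega

theorem le_optCount_of_mul_le_length {k : ℕ} (hk : 0 < k) (m : ℕ) {L : List ℝ}
    (hL : ∀ x ∈ L, 1 ≤ k * x) (hm : k * m ≤ L.length) : m ≤ optCount L := by
  induction m generalizing L with
  | zero => exact Nat.zero_le _
  | succ m ih =>
    rw [mul_add_one] at hm
    have htake : 1 ≤ (L.take k).sum := by
      have hlen : (L.take k).length = k := by simp only [List.length_take]; omega
      have := List.card_nsmul_le_sum (L.take k) (1 / k : ℝ)
        fun x hx => (div_le_iff₀' (by positivity)).mpr (hL x (List.mem_of_mem_take hx))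
      rwa [hlen, nsmul_eq_mul, mul_one_div_cancel (by positivity)] at this
    have hdrop : m ≤ optCount (L.drop k) :=
      ih (fun x hx => hL x (List.mem_of_mem_drop hx)) (by rw [List.length_drop]; omega)
    have := optCount_add_optCount_le (L.take k) (L.drop k)
    rw [List.take_append_drop] at this
    have := one_le_optCount htake
    omega

theorem succ_mul_optCount_le_length {k : ℕ} {I : List ℝ} (hI : ∀ x ∈ I, k * x < 1) :
    (k + 1) * optCount I ≤ I.length := by
  rw [optCount_eq_optOf]
  simpa using succ_mul_optOf_le_card (w := I.get) fun i => hI _ (List.get_mem I i)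

theorem foldl_dnfStep_of_add_sum_lt_one {J : List ℝ} (hJ : ∀ x ∈ J, 0 ≤ x) {s : ℝ}
    (hs : s + J.sum < 1) (c : ℕ) : J.foldl dnfStep (s, c) = (s + J.sum, c) := by
  induction J generalizing s with
  | nil => simp
  | cons x J ih =>
    have hJ' : 0 ≤ J.sum := List.sum_nonneg fun y hy => hJ y (List.mem_cons_of_mem x hy)
    have hx : ¬1 ≤ s + x := by simp only [List.sum_cons] at hs; linarith
    rw [List.foldl_cons, dnfStep, if_neg hx, ih (fun y hy => hJ y (List.mem_cons_of_mem x hy))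
      (by simpa [add_assoc] using hs)]
    simp [add_assoc]

theorem dnfCount_flatten (Ls : List (List ℝ))
    (h : ∀ L ∈ Ls, ∀ c, L.foldl dnfStep (0, c) = (0, c + 1)) :
    dnfCount Ls.flatten = Ls.length := by
  suffices ∀ c, Ls.flatten.foldl dnfStep (0, c) = (0, c + Ls.length) by simp [dnfCount, this]
  induction Ls with
  | nil => simp
  | cons L Ls ih =>
    intro c
    rw [List.flatten_cons, List.foldl_append, h L List.mem_cons_self,
      ih fun L' hL' => h L' (List.mem_cons_of_mem L hL')]
    simp [add_assoc, add_comm 1]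

/-- `m` stands for the number of items in the open bin, whose level is `s`. -/
theorem add_length_le_foldl_dnfStep {k : ℕ} {J : List ℝ} (hJ : ∀ x ∈ J, 1 ≤ (k + 1) * x)
    {s : ℝ} {c m : ℕ} (hm : m ≤ (k + 1) * s) (hs : s < 1) :
    m + J.length + (k + 1) * c ≤ (k + 1) * (J.foldl dnfStep (s, c)).2 + k := by
  have open_bin_le : ∀ {m : ℕ} {s : ℝ}, m ≤ (k + 1) * s → s < 1 → m ≤ k := fun hm hs => by
    have : (_ : ℝ) < k + 1 := hm.trans_lt (by nlinarith)
    exact Nat.lt_succ_iff.mp (by exact_mod_cast this)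
  induction J generalizing s c m with
  | nil => simpa [add_comm] using open_bin_le hm hs
  | cons x J ih =>
    have hx := hJ x List.mem_cons_self
    have hJ' := fun y hy => hJ y (List.mem_cons_of_mem x hy)
    rw [List.foldl_cons, dnfStep]
    split_ifs with hclose
    · have hrest := ih hJ' (m := 0) (s := 0) (c := c + 1) (by simp) one_pos
      have := open_bin_le hm hs
      simp only [List.length_cons, mul_add_one] at hrest ⊢
      omega
    · have := ih hJ' (m := m + 1) (s := s + x) (c := c) (by push_cast; linarith) (by linarith)
      simp only [List.length_cons] at this ⊢
      omega

theorem length_le_dnfCount {k : ℕ} {I : List ℝ} (hI : ∀ x ∈ I, 1 ≤ (k + 1) * x) :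
    I.length ≤ (k + 1) * dnfCount I + k := by
  simpa [dnfCount] using add_length_le_foldl_dnfStep hI (m := 0) (c := 0) (by simp) one_pos

section Adversary

variable (p : ℕ) (ε : ℝ)

noncomputable def smallItem (r : ℕ) : ℝ := 1 / p - ε / 2 ^ r

noncomputable def largeItem (r : ℕ) : ℝ := 1 / p + (p - 1) * (ε / 2 ^ r / 2)

noncomputable def adversaryRound (r : ℕ) : List ℝ :=
  List.replicate (p - 1) (smallItem p ε r) ++ [largeItem p ε r, largeItem p ε r]

noncomputable def adversary (N : ℕ) : List ℝ := (List.range N).flatMap (adversaryRound p ε)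

noncomputable def pairedBin (r : ℕ) : List ℝ :=
  largeItem p ε r :: List.replicate (p - 1) (smallItem p ε (r + 1))

variable {p ε}

theorem sum_pairedBin (hp : 1 ≤ p) (r : ℕ) : (pairedBin p ε r).sum = 1 := by
  have hp0 : (p : ℝ) ≠ 0 := by positivity
  simp only [pairedBin, smallItem, largeItem, List.sum_cons, List.sum_replicate, nsmul_eq_mul,
    Nat.cast_sub hp, pow_succ]
  field_simp
  ring

theorem foldl_adversaryRound (hp : 1 < p) (hε : 0 < ε) (hεp : ε ≤ 1 / p) (r c : ℕ) :
    (adversaryRound p ε r).foldl dnfStep (0, c) = (0, c + 1) := by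
  have hp1 : (1 : ℝ) < p := by exact_mod_cast hp
  have hp0 : 0 < 1 / (p : ℝ) := by positivity
  have hδ : 0 < ε / 2 ^ r := by positivity
  have hδε : ε / 2 ^ r ≤ ε := div_le_self hε.le (one_le_pow₀ (by norm_num))
  have hsmall : 0 ≤ smallItem p ε r := by rw [smallItem]; linarith
  have hlarge : 0 ≤ largeItem p ε r := by rw [largeItem]; positivity
  have hopen : (List.replicate (p - 1) (smallItem p ε r) ++ [largeItem p ε r]).sum
      = 1 - (p - 1) * (ε / 2 ^ r / 2) := by
    simp only [smallItem, largeItem, List.sum_append, List.sum_replicate, nsmul_eq_mul,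
      Nat.cast_sub hp.le, List.sum_singleton]
    field_simp
    ring
  have hclose : 1 ≤ 1 - (p - 1) * (ε / 2 ^ r / 2) + largeItem p ε r := by
    rw [largeItem]
    linarith
  have hnonneg : ∀ x ∈ List.replicate (p - 1) (smallItem p ε r) ++ [largeItem p ε r], 0 ≤ x := by
    simp only [List.mem_append, List.mem_replicate, List.mem_singleton]
    rintro x (⟨-, rfl⟩ | rfl) <;> assumption
  rw [adversaryRound, ← List.singleton_append, ← List.append_assoc, List.foldl_append,
    foldl_dnfStep_of_add_sum_lt_one hnonneg (by rw [hopen]; nlinarith) c]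
  simp [dnfStep, hopen, hclose]

theorem dnfCount_adversary (hp : 1 < p) (hε : 0 < ε) (hεp : ε ≤ 1 / p) (N : ℕ) :
    dnfCount (adversary p ε N) = N := by
  rw [adversary, List.flatMap_def, dnfCount_flatten, List.length_map, List.length_range]
  simp only [List.mem_map]
  rintro _ ⟨r, -, rfl⟩
  exact foldl_adversaryRound hp hε hεp r

theorem adversary_succ_perm (N : ℕ) : (adversary p ε (N + 1)).Perm
    ((List.replicate (p - 1) (smallItem p ε 0) ++ [largeItem p ε N]) ++
      (((List.range N).map (pairedBin p ε)).flatten ++ (List.range (N + 1)).map (largeItem p ε))) := by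
  induction N with
  | zero => simp [adversary, adversaryRound]
  | succ N ih =>
    rw [adversary, List.range_succ, List.flatMap_append, ← adversary]
    refine (ih.append_right _).trans (List.perm_iff_count.mpr fun x => ?_)
    simp only [List.range_succ, List.map_append, List.map_singleton, List.flatten_append,
      List.flatten_singleton, List.flatMap_singleton, adversaryRound, pairedBin, List.count_append,
      List.count_cons, List.count_nil]
    omega

theorem abs_sub_le_of_mem_adversary (hp : 1 ≤ p) (hε : 0 ≤ ε) {N : ℕ} {x : ℝ}
    (hx : x ∈ adversary p ε N) : |x - 1 / p| ≤ p * ε := by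
  have hp1 : (1 : ℝ) ≤ p := by exact_mod_cast hp
  simp only [adversary, adversaryRound, List.mem_flatMap, List.mem_append, List.mem_replicate,
    List.mem_cons, List.not_mem_nil, or_false] at hx
  obtain ⟨r, -, hx⟩ := hx
  have hδ : 0 ≤ ε / 2 ^ r := by positivity
  have hδε : ε / 2 ^ r ≤ ε := div_le_self hε (one_le_pow₀ (by norm_num))
  rw [abs_le]
  rcases hx with ⟨-, rfl⟩ | rfl | rfl <;> simp only [smallItem, largeItem] <;>
    constructor <;> nlinarith

theorem le_optCount_adversary (hp : 1 < p) (hε : 0 ≤ ε) {N M : ℕ} (hM : p * M ≤ N + 1) :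
    N + M ≤ optCount (adversary p ε (N + 1)) := by
  have hp0 : (0 : ℝ) < p := by positivity
  have hpaired : N ≤ optCount ((List.range N).map (pairedBin p ε)).flatten := by
    simpa using length_le_optCount_flatten ((List.range N).map (pairedBin p ε))
      (by simp [sum_pairedBin hp.le])
  have hlarge : M ≤ optCount ((List.range (N + 1)).map (largeItem p ε)) := by
    refine le_optCount_of_mul_le_length (k := p) (by omega) M ?_ (by simpa using hM)
    simp only [List.mem_map, List.mem_range]
    rintro _ ⟨r, -, rfl⟩
    rw [largeItem, mul_add, mul_one_div_cancel hp0.ne']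
    have : (1 : ℝ) ≤ p := by exact_mod_cast hp.le
    have : 0 ≤ (p - 1) * (ε / 2 ^ r / 2) := mul_nonneg (by linarith) (by positivity)
    nlinarith
  rw [optCount_perm (adversary_succ_perm N)]
  have := optCount_add_optCount_le ((List.range N).map (pairedBin p ε)).flatten
    ((List.range (N + 1)).map (largeItem p ε))
  have := optCount_le_append_left (List.replicate (p - 1) (smallItem p ε 0) ++ [largeItem p ε N])
    (((List.range N).map (pairedBin p ε)).flatten ++ (List.range (N + 1)).map (largeItem p ε))
  omega

end Adversary

theorem div_mul_optCount_sub_one_le_dnfCount {p : ℕ} (hp : 1 ≤ p) {I : List ℝ}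
    (hI : ∀ x ∈ I, 1 ≤ (p + 1) * x ∧ (p - 1) * x < 1) :
    p / (p + 1) * (optCount I : ℝ) - 1 ≤ dnfCount I := by
  obtain ⟨k, rfl⟩ : ∃ k, p = k + 1 := ⟨p - 1, by omega⟩
  have hopt := succ_mul_optCount_le_length (k := k) fun x hx => by
    simpa using (hI x hx).2
  have hdnf := length_le_dnfCount (k := k + 1) fun x hx => by
    simpa using (hI x hx).1
  have h : ((k + 1 : ℕ) : ℝ) * optCount I ≤ (k + 2) * dnfCount I + (k + 1) := by
    exact_mod_cast hopt.trans hdnf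
  push_cast at h ⊢
  rw [div_mul_eq_mul_div, div_sub_one (by positivity), div_le_iff₀ (by positivity)]
  nlinarith

theorem le_div_of_forall_adversary {p : ℕ} (hp : 1 < p) {ε : ℝ} (hε : 0 < ε) (hεp : ε ≤ 1 / p)
    {c β : ℝ} (h : ∀ N, c * optCount (adversary p ε N) + β ≤ dnfCount (adversary p ε N)) :
    c ≤ p / (p + 1) := by
  rcases le_or_gt c 0 with hc | hc
  · exact hc.trans (by positivity)
  have hbound : ∀ M : ℕ, M * (c * (p + 1) - p) ≤ 1 - β := fun M => by
    have hM := h (p * M + 1)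
    rw [dnfCount_adversary hp hε hεp] at hM
    have hopt : ((p * M + M : ℕ) : ℝ) ≤ optCount (adversary p ε (p * M + 1)) := by
      exact_mod_cast le_optCount_adversary hp hε.le (Nat.le_succ _)
    push_cast at hM hopt
    nlinarith
  rw [le_div_iff₀ (by positivity)]
  by_contra! hlt
  obtain ⟨M, hM⟩ := exists_nat_gt ((1 - β) / (c * (p + 1) - p))
  rw [div_lt_iff₀ (by linarith)] at hM
  linarith [hbound M]

theorem sub_one_mul_le_one_of_only_reciprocal {p : ℕ} (hp : 2 ≤ p) {a b : ℝ}
    (hsub : Set.Ioo a b ⊆ Set.Ioo 0 1) (ha : a < 1 / p)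
    (honly : ∀ l : ℕ, 2 ≤ l → 1 / (l : ℝ) ∈ Set.Ioo a b → l = p) :
    ((p : ℝ) - 1) * b ≤ 1 := by
  obtain ⟨l, rfl⟩ : ∃ l, p = l + 1 := ⟨p - 1, by omega⟩
  push_cast at ha ⊢
  rw [add_sub_cancel_right]
  by_contra! h
  have hl : (0 : ℝ) < l := by exact_mod_cast (show 0 < l by omega)
  have hmem : 1 / (l : ℝ) ∈ Set.Ioo a b :=
    ⟨ha.trans (one_div_lt_one_div_of_lt hl (by linarith)), by rwa [div_lt_iff₀ hl, mul_comm]⟩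
  rcases (show l = 1 ∨ 2 ≤ l by omega) with rfl | hl2
  · simpa using (hsub hmem).2
  · exact absurd (honly l hl2 hmem) (by omega)

/-- If `(a,b) ⊆ (0,1)` with `1/(p+1) ≤ a < 1/p < b` and `1/p` is the only point of
the form `1/l` (integer `l ≥ 2`) in `(a,b)`, then the competitive ratio of DNF
restricted to item sizes in `(a,b)` equals `p/(p+1)`. -/
theorem dnf_restricted_CR_eq (p : ℕ) (hp : 2 ≤ p) (a b : ℝ)
    (hsub : Set.Ioo a b ⊆ Set.Ioo (0:ℝ) 1)
    (ha1 : 1/((p:ℝ)+1) ≤ a) (ha2 : a < 1/(p:ℝ)) (hb : 1/(p:ℝ) < b)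
    (honly : ∀ l : ℕ, 2 ≤ l → (1/(l:ℝ)) ∈ Set.Ioo a b → l = p) :
    CRrestricted (Set.Ioo a b) dnfCount = (p:ℝ)/((p:ℝ)+1) := by
  have hp1 : (1 : ℝ) < p := by exact_mod_cast hp
  have hpb := sub_one_mul_le_one_of_only_reciprocal hp hsub ha2 honly
  refine IsGreatest.csSup_eq ⟨⟨-1, fun I hI => ?_⟩, fun c ⟨β, hβ⟩ => ?_⟩
  · have hcover : ∀ x ∈ I, 1 ≤ (p + 1) * x ∧ (p - 1) * x < 1 := fun x hx =>
      ⟨(div_le_iff₀' (by positivity)).mp (ha1.trans (hI x hx).1.le), by nlinarith [(hI x hx).2]⟩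
    linarith [div_mul_optCount_sub_one_le_dnfCount (by omega) hcover]
  · obtain ⟨ε, hε, hεδ⟩ := exists_pos_mul_lt (lt_min (sub_pos.2 ha2) (sub_pos.2 hb)) p
    have hεp : ε ≤ 1 / p := by
      have : 0 < a := (by positivity : (0 : ℝ) < 1 / (p + 1)).trans_le ha1
      nlinarith [min_le_left (1 / (p : ℝ) - a) (b - 1 / p)]
    refine le_div_of_forall_adversary (by omega) hε hεp fun N => hβ _ fun x hx => ?_
    have := abs_le.mp (abs_sub_le_of_mem_adversary (by omega) hε.le hx)
    constructor <;> linarith [min_le_left (1 / (p : ℝ) - a) (b - 1 / p),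
      min_le_right (1 / (p : ℝ) - a) (b - 1 / p)]
end

section
/- For every integer k ≥ 2 and every input sequence I, DH_k,W(I) ≥ DNF_W(I) − (k − 1). -/
open Filter MeasureTheory

/-!
Let `J` be a worst order of `I` for `DH_k` and reorder it as the items of class
`[1/j, 1/(j-1))` for `j = 2, …, k`, followed by the items below `1/k` in their order in `J`.
Since `j - 1` items of class `j` never cover a bin, Dual Next-Fit started with an empty bin
covers at most `⌊n_j / j⌋` bins on the block of the `n_j` items of class `j`, and on the small
items it does exactly what `DH_k` does. Entering a block with a partially filled bin instead of
an empty one gains at most one bin, so on this permutation of `I` Dual Next-Fit covers at most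
`DH_k(J) + (k - 1)` bins.
-/

namespace List

theorem foldr_min_mem {α : Type*} [LinearOrder α] (l : List α) (b : α) :
    l.foldr min b ∈ b :: l := by
  induction l with
  | nil => exact mem_cons_self
  | cons x l ih =>
    rw [foldr_cons]
    rcases min_choice x (l.foldr min b) with h | h <;> rw [h]
    · exact mem_cons_of_mem _ mem_cons_self
    · rcases mem_cons.mp ih with h' | h'
      · rw [h']; exact mem_cons_self
      · exact mem_cons_of_mem _ (mem_cons_of_mem _ h')

end List

theorem worstOf_le (A : List ℝ → ℕ) {I J : List ℝ} (h : J.Perm I) : worstOf A I ≤ A J :=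
  List.min_le_of_le' _ (List.mem_map.mpr ⟨J, List.mem_permutations.mpr h, rfl⟩) le_rfl

theorem exists_perm_worstOf_eq (A : List ℝ → ℕ) (I : List ℝ) :
    ∃ J, J.Perm I ∧ worstOf A I = A J := by
  rcases List.mem_cons.mp (List.foldr_min_mem (I.permutations.map A) (A I)) with h | h
  · exact ⟨I, List.Perm.refl I, h⟩
  · obtain ⟨J, hJ, hAJ⟩ := List.mem_map.mp h
    exact ⟨J, List.mem_permutations.mp hJ, hAJ.symm⟩

noncomputable def dnfFrom (a : ℝ) (L : List ℝ) : ℕ := (L.foldl dnfStep (a, 0)).2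

noncomputable def dnfLevel (a : ℝ) (L : List ℝ) : ℝ := (L.foldl dnfStep (a, 0)).1

theorem dnfCount_eq_dnfFrom (L : List ℝ) : dnfCount L = dnfFrom 0 L := rfl

theorem foldl_dnfStep (L : List ℝ) (a : ℝ) (c : ℕ) :
    L.foldl dnfStep (a, c) = (dnfLevel a L, c + dnfFrom a L) := by
  induction L generalizing a c with
  | nil => simp [dnfLevel, dnfFrom]
  | cons x L ih =>
    simp only [dnfLevel, dnfFrom, List.foldl_cons, dnfStep]
    split_ifs <;> simp only [ih, Prod.mk.injEq, true_and] <;> omega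

theorem dnfFrom_cons (a x : ℝ) (L : List ℝ) :
    dnfFrom a (x :: L) = if 1 ≤ a + x then 1 + dnfFrom 0 L else dnfFrom (a + x) L := by
  conv_lhs => rw [dnfFrom, List.foldl_cons, dnfStep]
  split_ifs <;> simp [foldl_dnfStep]

theorem dnfLevel_cons (a x : ℝ) (L : List ℝ) :
    dnfLevel a (x :: L) = if 1 ≤ a + x then dnfLevel 0 L else dnfLevel (a + x) L := by
  conv_lhs => rw [dnfLevel, List.foldl_cons, dnfStep]
  split_ifs <;> simp [foldl_dnfStep]

theorem dnfFrom_append (a : ℝ) (A B : List ℝ) :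
    dnfFrom a (A ++ B) = dnfFrom a A + dnfFrom (dnfLevel a A) B := by
  rw [dnfFrom, List.foldl_append, foldl_dnfStep A, foldl_dnfStep B, zero_add]

theorem dnfLevel_nonneg {L : List ℝ} (hL : ∀ x ∈ L, 0 ≤ x) {a : ℝ} (ha : 0 ≤ a) :
    0 ≤ dnfLevel a L := by
  induction L generalizing a with
  | nil => simpa [dnfLevel] using ha
  | cons x L ih =>
    have hx := hL x List.mem_cons_self
    rw [dnfLevel_cons]
    split_ifs
    · exact ih (fun y hy => hL y (List.mem_cons_of_mem _ hy)) le_rfl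
    · exact ih (fun y hy => hL y (List.mem_cons_of_mem _ hy)) (add_nonneg ha hx)

theorem dnfFrom_mono_and_le_succ {L : List ℝ} (hL : ∀ x ∈ L, 0 ≤ x) {a b : ℝ} (hb : 0 ≤ b)
    (hba : b ≤ a) : dnfFrom b L ≤ dnfFrom a L ∧ dnfFrom a L ≤ dnfFrom b L + 1 := by
  induction L generalizing a b with
  | nil => simp [dnfFrom]
  | cons x L ih =>
    have hx := hL x List.mem_cons_self
    have ih' := @ih fun y hy => hL y (List.mem_cons_of_mem _ hy)
    rw [dnfFrom_cons, dnfFrom_cons]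
    by_cases hbx : 1 ≤ b + x
    · simp [hbx, show 1 ≤ a + x by linarith]
    by_cases hax : 1 ≤ a + x
    · simp only [if_pos hax, if_neg hbx]
      have := ih' (a := b + x) (b := 0) le_rfl (by linarith)
      omega
    · simp only [if_neg hax, if_neg hbx]
      exact ih' (a := a + x) (b := b + x) (by linarith) (by linarith)

theorem dnfFrom_le_dnfCount_add_one {L : List ℝ} (hL : ∀ x ∈ L, 0 ≤ x) {a : ℝ} (ha : 0 ≤ a) :
    dnfFrom a L ≤ dnfCount L + 1 :=
  (dnfFrom_mono_and_le_succ hL le_rfl ha).2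

theorem dnfCount_append_le {A B : List ℝ} (hA : ∀ x ∈ A, 0 ≤ x) (hB : ∀ x ∈ B, 0 ≤ x) :
    dnfCount (A ++ B) ≤ dnfCount A + dnfCount B + 1 := by
  have h := dnfFrom_le_dnfCount_add_one hB (dnfLevel_nonneg hA le_rfl)
  rw [dnfCount_eq_dnfFrom, dnfFrom_append, ← dnfCount_eq_dnfFrom]
  omega

theorem dnfCount_flatten_append_le (Ls : List (List ℝ)) {R : List ℝ}
    (hLs : ∀ L ∈ Ls, ∀ x ∈ L, 0 ≤ x) (hR : ∀ x ∈ R, 0 ≤ x) :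
    dnfCount (Ls.flatten ++ R) ≤ (Ls.map dnfCount).sum + Ls.length + dnfCount R := by
  induction Ls with
  | nil => simp
  | cons L Ls ih =>
    have hL := hLs L List.mem_cons_self
    have ih := ih fun L' hL' => hLs L' (List.mem_cons_of_mem _ hL')
    have hrest : ∀ x ∈ Ls.flatten ++ R, 0 ≤ x := by
      intro x hx
      rcases List.mem_append.mp hx with hx | hx
      · obtain ⟨L', hL', hxL'⟩ := List.mem_flatten.mp hx
        exact hLs L' (List.mem_cons_of_mem _ hL') x hxL'
      · exact hR x hx
    rw [List.flatten_cons, List.append_assoc]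
    have := dnfCount_append_le hL hrest
    simp only [List.map_cons, List.sum_cons, List.length_cons]
    omega

/-- Invariant: the open bin holds `c` items, all `< u`, so its level is `a ≤ c * u`; since `n`
items never cover a bin, each covered bin receives at least `n + 1` items. -/
theorem succ_mul_dnfFrom_le {n : ℕ} {u : ℝ} (hnu : n * u ≤ 1) {L : List ℝ}
    (hL : ∀ x ∈ L, x < u) {a : ℝ} {c : ℕ} (ha : a ≤ c * u) :
    (n + 1) * dnfFrom a L ≤ L.length + c := by
  induction L generalizing a c with
  | nil => simp [dnfFrom]
  | cons x L ih =>
    have hx := hL x List.mem_cons_self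
    have ih := @ih fun y hy => hL y (List.mem_cons_of_mem _ hy)
    rw [dnfFrom_cons, List.length_cons]
    split_ifs with hcover
    · have hcu : 1 < ((c : ℝ) + 1) * u := by linarith
      have hu : 0 < u := by
        by_contra! hu
        nlinarith [Nat.cast_nonneg (α := ℝ) c]
      have hnc : n < c + 1 := by
        exact_mod_cast lt_of_mul_lt_mul_right (hnu.trans_lt hcu) hu.le
      have := ih (a := 0) (c := 0) (by simp)
      rw [mul_add, mul_one]
      linarith
    · have := ih (a := a + x) (c := c + 1) (by push_cast; linarith)
      linarith

theorem dnfCount_le_length_div {n : ℕ} {u : ℝ} (hnu : n * u ≤ 1) {L : List ℝ}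
    (hL : ∀ x ∈ L, x < u) : dnfCount L ≤ L.length / (n + 1) := by
  rw [Nat.le_div_iff_mul_le n.succ_pos, mul_comm]
  simpa [dnfCount_eq_dnfFrom] using succ_mul_dnfFrom_le hnu hL (a := 0) (c := 0) (by simp)

noncomputable def harmonicOrder (k : ℕ) (I : List ℝ) : List ℝ :=
  ((List.range' 2 (k - 1)).map fun j : ℕ =>
      I.filter fun x => decide ((1:ℝ)/(j:ℝ) ≤ x ∧ x < 1/((j:ℝ)-1))).flatten
    ++ I.filter fun x => decide (x < 1/(k:ℝ))

theorem filter_class_append_filter_lt_perm {k : ℕ} (hk : 1 ≤ k) (I : List ℝ) :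
    ((I.filter fun x => decide ((1:ℝ)/((k + 1 : ℕ):ℝ) ≤ x ∧ x < 1/(((k + 1 : ℕ):ℝ)-1)))
      ++ I.filter fun x => decide (x < 1/((k + 1 : ℕ):ℝ))).Perm
      (I.filter fun x => decide (x < 1/(k:ℝ))) := by
  have hk0 : (0:ℝ) < k := by exact_mod_cast hk
  have hlt : (1:ℝ)/((k + 1 : ℕ):ℝ) < 1/(k:ℝ) := by
    push_cast; exact one_div_lt_one_div_of_lt hk0 (by linarith)
  convert List.filter_append_perm (fun x => decide ((1:ℝ)/((k + 1 : ℕ):ℝ) ≤ x))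
    (I.filter fun x => decide (x < 1/(k:ℝ))) using 2 <;>
    rw [List.filter_filter] <;> refine List.filter_congr fun x _ => ?_
  · simp only [Nat.cast_add, Nat.cast_one, add_sub_cancel_right, Bool.decide_and]
  · by_cases hx : x < 1/((k + 1 : ℕ):ℝ)
    · rw [decide_eq_true hx, decide_eq_false (not_le.mpr hx), decide_eq_true (hx.trans hlt)]
      rfl
    · rw [decide_eq_false hx, decide_eq_true (not_lt.mp hx)]
      rfl

theorem harmonicOrder_perm {k : ℕ} (hk : 1 ≤ k) {I : List ℝ} (hI : ∀ x ∈ I, x < 1) :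
    (harmonicOrder k I).Perm I := by
  induction k, hk using Nat.le_induction with
  | base =>
    rw [harmonicOrder, List.filter_eq_self.mpr (by simpa using hI)]
    simp
  | succ k hk ih =>
    have hrange : List.range' 2 (k + 1 - 1) = List.range' 2 (k - 1) ++ [k + 1] := by
      rw [show k + 1 - 1 = k - 1 + 1 by omega, List.range'_concat]
      congr 2
      omega
    rw [harmonicOrder, hrange, List.map_append, List.flatten_append, List.map_singleton,
      List.flatten_singleton, List.append_assoc]
    exact ((filter_class_append_filter_lt_perm hk I).append_left _).trans ih

theorem dnfCount_filter_class_le {j : ℕ} (hj : 2 ≤ j) (I : List ℝ) :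
    dnfCount (I.filter fun x => decide ((1:ℝ)/(j:ℝ) ≤ x ∧ x < 1/((j:ℝ)-1))) ≤
      (I.countP fun x => decide ((1:ℝ)/(j:ℝ) ≤ x ∧ x < 1/((j:ℝ)-1))) / j := by
  obtain ⟨n, rfl⟩ : ∃ n, j = n + 1 := ⟨j - 1, by omega⟩
  have hn : (1:ℝ) ≤ n := by exact_mod_cast (by omega : 1 ≤ n)
  rw [List.countP_eq_length_filter]
  refine dnfCount_le_length_div (u := 1/(((n + 1 : ℕ):ℝ)-1)) ?_ fun x hx => ?_
  · push_cast
    rw [add_sub_cancel_right, mul_one_div_cancel (by positivity)]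
  · exact (of_decide_eq_true (List.mem_filter.mp hx).2).2

theorem dnfCount_harmonicOrder_le (k : ℕ) {I : List ℝ} (hI : ∀ x ∈ I, 0 ≤ x) :
    dnfCount (harmonicOrder k I) ≤ dhCount k I + (k - 1) := by
  rw [dhCount, harmonicOrder]
  set blocks := (List.range' 2 (k - 1)).map fun j : ℕ =>
    I.filter fun x => decide ((1:ℝ)/(j:ℝ) ≤ x ∧ x < 1/((j:ℝ)-1))
  have hblocks : ∀ L ∈ blocks, ∀ x ∈ L, 0 ≤ x := by
    simp only [blocks, List.mem_map]
    rintro _ ⟨j, -, rfl⟩ x hx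
    exact hI x (List.mem_filter.mp hx).1
  have hsum : (blocks.map dnfCount).sum ≤ ∑ j ∈ Finset.Icc 2 k,
      (I.countP fun x => decide ((1:ℝ)/(j:ℝ) ≤ x ∧ x < 1/((j:ℝ)-1))) / j := by
    have hIcc : Finset.Icc 2 k = (List.range' 2 (k - 1)).toFinset := by
      ext j
      simp only [Finset.mem_Icc, List.mem_toFinset, List.mem_range'_1]
      omega
    rw [hIcc, List.sum_toFinset _ List.nodup_range', List.map_map]
    exact List.sum_le_sum fun j hj => dnfCount_filter_class_le (List.mem_range'_1.mp hj).1 I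
  have := dnfCount_flatten_append_le blocks hblocks
    (R := I.filter fun x => decide (x < 1/(k:ℝ))) fun x hx => hI x (List.mem_filter.mp hx).1
  rw [List.length_map, List.length_range'] at this
  omega

/-- For every `k ≥ 2` and every input sequence `I`,
`DH_{k,W}(I) ≥ DNF_W(I) - (k-1)`. -/
theorem dh_worst_ge_dnf_worst (k : ℕ) (hk : 2 ≤ k) (I : List ℝ) (hI : validInput I) :
    (worstOf dnfCount I : ℝ) - ((k:ℝ) - 1) ≤ (worstOf (dhCount k) I : ℝ) := by
  obtain ⟨J, hJI, hworst⟩ := exists_perm_worstOf_eq (dhCount k) I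
  have hJ : validInput J := fun x hx => hI x (hJI.mem_iff.mp hx)
  have hle : worstOf dnfCount I ≤ dhCount k J + (k - 1) :=
    (worstOf_le dnfCount ((harmonicOrder_perm (by omega) fun x hx => (hJ x hx).2).trans hJI)).trans
      (dnfCount_harmonicOrder_le k fun x hx => (hJ x hx).1.le)
  rw [hworst]
  have := (Nat.cast_le (α := ℝ)).mpr hle
  push_cast [Nat.cast_sub (by omega : 1 ≤ k)] at this
  linarith
end

section
/- For every integer k ≥ 2 and every n ≥ 1, the input sequence I_n consisting of 2n consecutive copies of the block ⟨1/2, 1/(2n), …, 1/(2n), 1/2⟩ (where each block contains n − 1 items of size 1/(2n)) satisfies DH_k,W(I_n) = 3n − 1 and DNF_W(I_n) ≤ 2n, so that DH_k,W(I_n) ≥ (3/2)·DNF_W(I_n) − 1; consequently, for every c < 3/2 and every constant b there exists an input sequence I with DH_k,W(I) > c·DNF_W(I) + b. -/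
open Filter MeasureTheory

/-- The sequence `I_n`: `2n` consecutive copies of the block
`⟨1/2, 1/(2n), …, 1/(2n), 1/2⟩` with `n-1` items of size `1/(2n)` per block. -/
noncomputable def Iseq (n : ℕ) : List ℝ :=
  (List.replicate (2*n)
    (((1:ℝ)/2) :: (List.replicate (n-1) ((1:ℝ)/(2*(n:ℝ))) ++ [(1:ℝ)/2]))).flatten

/-! Only the items below `1/k` reach the Next-Fit part of `DH_k`, and in `I_n` these all have the
same size `1/(2n)`; hence `DH_k` covers the same number of bins on every permutation of `I_n`:
`2n` bins of two halves plus `n - 1` bins of `2n` small items (packed either by the class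
`[1/(2n), 1/(2n-1))` or by Next-Fit), i.e. `3n - 1`. On `I_n` itself Dual Next-Fit closes
exactly one bin per block, because `1/2 + (n-1)/(2n) < 1`, so `DNF_W(I_n) ≤ 2n`.
Letting `n → ∞` gives the asymptotic separation. -/

open List

lemma foldr_min_le_init (b : ℕ) (l : List ℕ) : l.foldr min b ≤ b := by
  induction l with
  | nil => rfl
  | cons a l ih => exact (min_le_right _ _).trans ih

lemma foldr_min_eq_init (b : ℕ) (l : List ℕ) (h : ∀ x ∈ l, x = b) : l.foldr min b = b := by
  induction l with
  | nil => rfl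
  | cons a l ih =>
    rw [foldr_cons, ih fun x hx => h x (mem_cons_of_mem _ hx), h a mem_cons_self, min_self]

lemma worstOf_le_self (A : List ℝ → ℕ) (I : List ℝ) : worstOf A I ≤ A I :=
  foldr_min_le_init _ _

lemma worstOf_eq_self_of_perm {A : List ℝ → ℕ} {I : List ℝ} (h : ∀ J, J.Perm I → A J = A I) :
    worstOf A I = A I :=
  foldr_min_eq_init _ _ fun _ hx => by
    obtain ⟨J, hJ, rfl⟩ := mem_map.1 hx
    exact h J (perm_of_mem_permutations hJ)

lemma foldl_dnfStep_replicate_of_lt {a : ℝ} (ha : 0 ≤ a) (c : ℕ) :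
    ∀ {i : ℕ} {s : ℝ}, s + i * a < 1 → (replicate i a).foldl dnfStep (s, c) = (s + i * a, c)
  | 0, s, _ => by simp
  | i + 1, s, h => by
    have hi : (0 : ℝ) ≤ i * a := by positivity
    have hstep : dnfStep (s, c) a = (s + a, c) := by
      rw [dnfStep, if_neg (by push_cast at h; linarith)]
    rw [replicate_succ, foldl_cons, hstep,
      foldl_dnfStep_replicate_of_lt ha c (by push_cast at h; linarith)]
    push_cast
    ring_nf

lemma foldl_dnfStep_replicate_one_div {q : ℕ} (hq : 1 ≤ q) (c : ℕ) :
    (replicate q (1 / (q : ℝ))).foldl dnfStep (0, c) = (0, c + 1) := by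
  obtain ⟨p, rfl⟩ : ∃ p, q = p + 1 := ⟨q - 1, by omega⟩
  have ha : (0 : ℝ) < 1 / ((p + 1 : ℕ) : ℝ) := by positivity
  have hfill : 0 + p * (1 / ((p + 1 : ℕ) : ℝ)) = 1 - 1 / ((p + 1 : ℕ) : ℝ) := by
    push_cast; field_simp; ring
  rw [replicate_succ', foldl_append,
    foldl_dnfStep_replicate_of_lt ha.le c (by rw [hfill]; linarith), hfill]
  simp [dnfStep]

lemma foldl_dnfStep_flatten_replicate {B : List ℝ}
    (hB : ∀ c, B.foldl dnfStep (0, c) = (0, c + 1)) (m c : ℕ) :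
    (replicate m B).flatten.foldl dnfStep (0, c) = (0, c + m) := by
  induction m generalizing c with
  | zero => rfl
  | succ m ih => rw [replicate_succ, flatten_cons, foldl_append, hB, ih, add_right_comm, add_assoc]

lemma dnfCount_flatten_replicate_s9 {B : List ℝ}
    (hB : ∀ c, B.foldl dnfStep (0, c) = (0, c + 1)) (m : ℕ) :
    dnfCount (replicate m B).flatten = m := by
  simp [dnfCount, foldl_dnfStep_flatten_replicate hB]

lemma dnfCount_replicate_mul_one_div {q : ℕ} (hq : 1 ≤ q) (m : ℕ) :
    dnfCount (replicate (m * q) (1 / (q : ℝ))) = m := by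
  rw [← flatten_replicate_replicate,
    dnfCount_flatten_replicate_s9 (foldl_dnfStep_replicate_one_div hq)]

lemma dhCount_perm {k : ℕ} {I J : List ℝ} {a : ℝ} (ha : ∀ x ∈ I, x < 1 / (k : ℝ) → x = a)
    (hJ : J.Perm I) : dhCount k J = dhCount k I := by
  have hsmall : I.filter (fun x => decide (x < 1 / (k : ℝ))) =
      replicate (I.filter fun x => decide (x < 1 / (k : ℝ))).length a :=
    eq_replicate_iff.2 ⟨rfl, fun x hx => by
      obtain ⟨hxI, hx⟩ := mem_filter.1 hx
      exact ha x hxI (of_decide_eq_true hx)⟩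
  have hJsmall := hJ.filter fun x => decide (x < 1 / (k : ℝ))
  rw [hsmall, perm_replicate] at hJsmall
  unfold dhCount
  rw [hJsmall, ← hsmall]
  congr 1
  exact Finset.sum_congr rfl fun j _ => by rw [hJ.countP_eq]

lemma one_div_natCast_lt_one_div_natCast_iff {k m : ℕ} (hk : 1 ≤ k) (hm : 1 ≤ m) :
    1 / (m : ℝ) < 1 / (k : ℝ) ↔ k < m := by
  rw [one_div_lt_one_div (by positivity) (by positivity), Nat.cast_lt]

lemma one_div_natCast_mem_Ico_iff {j m : ℕ} (hj : 2 ≤ j) (hm : 1 ≤ m) :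
    (1 / (j : ℝ) ≤ 1 / (m : ℝ) ∧ 1 / (m : ℝ) < 1 / ((j : ℝ) - 1)) ↔ j = m := by
  have hj' : (1 : ℝ) < j := by exact_mod_cast hj
  rw [one_div_le_one_div (by linarith) (by positivity),
    one_div_lt_one_div (by positivity) (by linarith), sub_lt_iff_lt_add, Nat.cast_le]
  norm_cast
  omega

noncomputable def IseqBlock (n : ℕ) : List ℝ :=
  1 / 2 :: (replicate (n - 1) (1 / (2 * n : ℝ)) ++ [1 / 2])

lemma Iseq_eq_flatten (n : ℕ) : Iseq n = (replicate (2 * n) (IseqBlock n)).flatten := rfl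

lemma mem_Iseq {n : ℕ} {x : ℝ} (hx : x ∈ Iseq n) : x = 1 / 2 ∨ x = 1 / (2 * n : ℝ) := by
  obtain ⟨B, hB, hxB⟩ := mem_flatten.1 hx
  rw [eq_of_mem_replicate hB] at hxB
  simp only [mem_cons, mem_append, mem_replicate, List.not_mem_nil, or_false] at hxB
  tauto

lemma validInput_Iseq {n : ℕ} (hn : 1 ≤ n) : validInput (Iseq n) := by
  have hn' : (1 : ℝ) ≤ n := by exact_mod_cast hn
  intro x hx
  rcases mem_Iseq hx with rfl | rfl
  · norm_num
  · exact ⟨by positivity, by rw [div_lt_one (by positivity)]; linarith⟩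

lemma countP_Iseq (n : ℕ) (p : ℝ → Bool) :
    (Iseq n).countP p =
      2 * n * ((if p (1 / 2) then 2 else 0) + if p (1 / (2 * n : ℝ)) then n - 1 else 0) := by
  rw [Iseq_eq_flatten, countP_flatten, map_replicate, sum_replicate, smul_eq_mul, IseqBlock,
    countP_cons, countP_append, countP_replicate, countP_singleton]
  congr 1
  split_ifs <;> omega

lemma foldl_dnfStep_IseqBlock {n : ℕ} (hn : 1 ≤ n) (c : ℕ) :
    (IseqBlock n).foldl dnfStep (0, c) = (0, c + 1) := by
  have hn' : (1 : ℝ) ≤ n := by exact_mod_cast hn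
  have hsmall : ((n - 1 : ℕ) : ℝ) * (1 / (2 * n)) = 1 / 2 - 1 / (2 * n) := by
    rw [Nat.cast_sub hn]; field_simp; ring
  have hpos : (0 : ℝ) < 1 / (2 * n) := by positivity
  have hle : 1 / (2 * n : ℝ) ≤ 1 / 2 := by gcongr; linarith
  have hfirst : dnfStep (0, c) (1 / 2) = (1 / 2, c) := by norm_num [dnfStep]
  rw [IseqBlock, foldl_cons, foldl_append, hfirst,
    foldl_dnfStep_replicate_of_lt hpos.le c (by rw [hsmall]; linarith), hsmall]
  simp only [foldl_cons, foldl_nil, dnfStep]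
  rw [if_pos (by linarith)]

lemma dnfCount_Iseq {n : ℕ} (hn : 1 ≤ n) : dnfCount (Iseq n) = 2 * n :=
  dnfCount_flatten_replicate_s9 (foldl_dnfStep_IseqBlock hn) _

lemma one_div_two_eq_one_div_natCast : (1 / 2 : ℝ) = 1 / ((2 : ℕ) : ℝ) := by norm_num

lemma one_div_two_mul_natCast (n : ℕ) : 1 / (2 * n : ℝ) = 1 / ((2 * n : ℕ) : ℝ) := by
  push_cast; rfl

lemma one_div_two_not_lt_one_div {k : ℕ} (hk : 2 ≤ k) : ¬ (1 / 2 : ℝ) < 1 / k := by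
  rw [one_div_two_eq_one_div_natCast,
    one_div_natCast_lt_one_div_natCast_iff (by omega) (by norm_num : 1 ≤ 2)]
  omega

lemma eq_of_mem_Iseq_of_lt_one_div {k n : ℕ} (hk : 2 ≤ k) {x : ℝ} (hx : x ∈ Iseq n)
    (hxk : x < 1 / k) : x = 1 / (2 * n : ℝ) :=
  (mem_Iseq hx).resolve_left fun h => one_div_two_not_lt_one_div hk (h ▸ hxk)

-- A multiple of `j`, so that the division by `j` in `dhCount` is exact.
lemma countP_bucket_Iseq {n j : ℕ} (hn : 1 ≤ n) (hj : 2 ≤ j) :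
    (Iseq n).countP (fun x => decide (1 / (j : ℝ) ≤ x ∧ x < 1 / ((j : ℝ) - 1))) =
      j * ((if j = 2 then 2 * n else 0) + if j = 2 * n then n - 1 else 0) := by
  rw [countP_Iseq, one_div_two_mul_natCast, one_div_two_eq_one_div_natCast]
  simp only [decide_eq_true_eq, one_div_natCast_mem_Ico_iff hj (by norm_num : 1 ≤ 2),
    one_div_natCast_mem_Ico_iff hj (by omega : 1 ≤ 2 * n)]
  split_ifs with h2 h2n h2n <;> subst_vars
  · obtain rfl : n = 1 := by omega
    rfl
  all_goals ring

lemma sum_buckets_Iseq {k n : ℕ} (hk : 2 ≤ k) (hn : 1 ≤ n) :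
    ∑ j ∈ Finset.Icc 2 k,
        (Iseq n).countP (fun x => decide (1 / (j : ℝ) ≤ x ∧ x < 1 / ((j : ℝ) - 1))) / j =
      2 * n + if 2 * n ≤ k then n - 1 else 0 := by
  rw [Finset.sum_congr rfl fun j hj => by
      rw [countP_bucket_Iseq hn (Finset.mem_Icc.1 hj).1,
        Nat.mul_div_cancel_left _ (by have := (Finset.mem_Icc.1 hj).1; omega)],
    Finset.sum_add_distrib, Finset.sum_ite_eq', Finset.sum_ite_eq',
    if_pos (Finset.mem_Icc.2 ⟨le_rfl, hk⟩)]
  simp only [Finset.mem_Icc, show 2 ≤ 2 * n by omega, true_and]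

lemma filter_lt_one_div_Iseq {k n : ℕ} (hk : 2 ≤ k) (hn : 1 ≤ n) :
    (Iseq n).filter (fun x => decide (x < 1 / (k : ℝ))) =
      replicate ((if k < 2 * n then n - 1 else 0) * (2 * n)) (1 / ((2 * n : ℕ) : ℝ)) := by
  refine eq_replicate_iff.2 ⟨?_, fun x hx => ?_⟩
  · rw [← countP_eq_length_filter, countP_Iseq, one_div_two_mul_natCast]
    simp only [decide_eq_true_eq, one_div_two_not_lt_one_div hk, if_false, zero_add,
      one_div_natCast_lt_one_div_natCast_iff (by omega : 1 ≤ k) (by omega : 1 ≤ 2 * n)]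
    ring
  · obtain ⟨hxI, hxk⟩ := mem_filter.1 hx
    rw [eq_of_mem_Iseq_of_lt_one_div hk hxI (of_decide_eq_true hxk), one_div_two_mul_natCast]

lemma dhCount_Iseq {k n : ℕ} (hk : 2 ≤ k) (hn : 1 ≤ n) : dhCount k (Iseq n) = 3 * n - 1 := by
  rw [dhCount, sum_buckets_Iseq hk hn, filter_lt_one_div_Iseq hk hn,
    dnfCount_replicate_mul_one_div (by omega)]
  split_ifs <;> omega

lemma worstOf_dhCount_Iseq {k n : ℕ} (hk : 2 ≤ k) (hn : 1 ≤ n) :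
    worstOf (dhCount k) (Iseq n) = 3 * n - 1 := by
  rw [worstOf_eq_self_of_perm fun _ => dhCount_perm fun _ => eq_of_mem_Iseq_of_lt_one_div hk,
    dhCount_Iseq hk hn]

lemma exists_nat_mul_add_lt_three_mul_sub_one {c : ℝ} (hc : c < 3 / 2) (b : ℝ) :
    ∃ n : ℕ, 1 ≤ n ∧ ∀ w : ℝ, 0 ≤ w → w ≤ 2 * n → c * w + b < 3 * n - 1 := by
  have hgap : 0 < 3 - 2 * max c 0 := by
    have := max_lt hc (by norm_num : (0 : ℝ) < 3 / 2)
    linarith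
  obtain ⟨n, hn, hn1⟩ := ((tendsto_natCast_atTop_atTop.const_mul_atTop hgap).eventually_gt_atTop
    (b + 1) |>.and (eventually_ge_atTop 1)).exists
  refine ⟨n, hn1, fun w hw0 hw => ?_⟩
  have : c * w ≤ max c 0 * (2 * n) :=
    (mul_le_mul_of_nonneg_right (le_max_left c 0) hw0).trans
      (mul_le_mul_of_nonneg_left hw (le_max_right c 0))
  linarith

/-- For every `k ≥ 2` and `n ≥ 1`, the sequence `I_n` satisfies
`DH_{k,W}(I_n) = 3n - 1` and `DNF_W(I_n) ≤ 2n`, hence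
`DH_{k,W}(I_n) ≥ (3/2)·DNF_W(I_n) - 1`; consequently, for every `c < 3/2` and
every constant `b` there is an input `I` with `DH_{k,W}(I) > c·DNF_W(I) + b`. -/
theorem dh_worst_lower_family (k : ℕ) (hk : 2 ≤ k) :
    (∀ n : ℕ, 1 ≤ n →
      worstOf (dhCount k) (Iseq n) = 3*n - 1 ∧
      worstOf dnfCount (Iseq n) ≤ 2*n ∧
      (3/2 : ℝ) * (worstOf dnfCount (Iseq n) : ℝ) - 1 ≤ (worstOf (dhCount k) (Iseq n) : ℝ)) ∧
    (∀ c : ℝ, c < 3/2 → ∀ b : ℝ, ∃ I : List ℝ, validInput I ∧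
      c * (worstOf dnfCount I : ℝ) + b < (worstOf (dhCount k) I : ℝ)) := by
  have hdnf {n : ℕ} (hn : 1 ≤ n) : worstOf dnfCount (Iseq n) ≤ 2 * n :=
    (worstOf_le_self _ _).trans (dnfCount_Iseq hn).le
  have hdnf_cast {n : ℕ} (hn : 1 ≤ n) : (worstOf dnfCount (Iseq n) : ℝ) ≤ 2 * n := by
    exact_mod_cast hdnf hn
  have hdh {n : ℕ} (hn : 1 ≤ n) : (worstOf (dhCount k) (Iseq n) : ℝ) = 3 * n - 1 := by
    rw [worstOf_dhCount_Iseq hk hn, Nat.cast_sub (by omega)]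
    push_cast
    ring
  refine ⟨fun n hn => ⟨worstOf_dhCount_Iseq hk hn, hdnf hn, ?_⟩, fun c hc b => ?_⟩
  · linarith [hdh hn, hdnf_cast hn]
  · obtain ⟨n, hn, hlt⟩ := exists_nat_mul_add_lt_three_mul_sub_one hc b
    exact ⟨Iseq n, validInput_Iseq hn, hdh hn ▸ hlt _ (Nat.cast_nonneg _) (hdnf_cast hn)⟩
end

section
/- Both DNF and DH_k (for every integer k ≥ 2) have min/min ratio 1; in particular, liminf_{v→∞} inf{DNF(I)/v : vol(I) = v} = liminf_{v→∞} inf{DH_k(I)/v : vol(I) = v} = liminf_{v→∞} inf{Opt(I)/v : vol(I) = v} = 1/2. -/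
open Filter MeasureTheory

open Finset

section Opt

variable {I : List ℝ}

lemma le_optCount_of_covers (g : Fin I.length → ℕ) (hg : ∀ i, g i < I.length) (m : ℕ)
    (hcov : ∀ b < m, 1 ≤ ∑ i, if g i = b then I.get i else 0) : m ≤ optCount I := by
  have hm : m ≤ I.length := by
    by_contra! h
    have := hcov I.length h
    simp only [fun i => (hg i).ne, if_false, sum_const_zero] at this
    linarith
  let f : Fin I.length → Fin I.length := fun i => ⟨g i, hg i⟩
  calc m = #{b : Fin I.length | (b : ℕ) < m} := by rw [Fin.card_filter_val_lt, min_eq_right hm]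
    _ ≤ #{b | 1 ≤ ∑ i with f i = b, I.get i} := by
        refine card_le_card fun b hb => ?_
        simp only [mem_filter, mem_univ, true_and] at hb ⊢
        simpa only [sum_filter, f, Fin.ext_iff] using hcov b hb
    _ ≤ optCount I := le_sup (f := fun f : Fin I.length → Fin I.length =>
          #{b | 1 ≤ ∑ i with f i = b, I.get i}) (mem_univ f)

lemma optCount_le_length_div_two (hI : ∀ x ∈ I, x < 1) : optCount I ≤ I.length / 2 := by
  refine Finset.sup_le fun f _ => ?_
  set B := ({b | 1 ≤ ∑ i with f i = b, I.get i} : Finset (Fin I.length))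
  have two_le : ∀ b ∈ B, 2 ≤ #{i | f i = b} := by
    intro b hb
    by_contra! h
    replace hb : 1 ≤ ∑ i with f i = b, I.get i := (mem_filter.mp hb).2
    obtain h0 | h1 : #{i | f i = b} = 0 ∨ #{i | f i = b} = 1 := by omega
    · rw [card_eq_zero.mp h0, sum_empty] at hb
      linarith
    · obtain ⟨a, ha⟩ := card_eq_one.mp h1
      rw [ha, sum_singleton] at hb
      linarith [hI _ (List.get_mem I a)]
  have : 2 * #B ≤ I.length := calc
    2 * #B ≤ ∑ b ∈ B, #{i | f i = b} := by
      simpa [mul_comm] using card_nsmul_le_sum B _ 2 two_le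
    _ = #{i | f i ∈ B} := by
      rw [card_eq_sum_card_fiberwise (t := B) (s := {i | f i ∈ B}) fun i hi => (mem_filter.mp hi).2]
      refine sum_congr rfl fun b hb => congrArg card ?_
      ext i
      simp only [mem_filter, mem_univ, true_and]
      exact ⟨fun h => ⟨h ▸ hb, h⟩, And.right⟩
    _ ≤ I.length := (card_le_univ _).trans_eq (Fintype.card_fin _)
  omega

end Opt

section DualNextFit

lemma dnfStep_of_one_le {s : ℝ × ℕ} {x : ℝ} (h : 1 ≤ s.1 + x) : dnfStep s x = (0, s.2 + 1) :=
  if_pos h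

lemma dnfStep_of_lt_one {s : ℝ × ℕ} {x : ℝ} (h : s.1 + x < 1) : dnfStep s x = (s.1 + x, s.2) :=
  if_neg h.not_ge

lemma dnfStep_snd_mem_Icc (s : ℝ × ℕ) (x : ℝ) : (dnfStep s x).2 ∈ Set.Icc s.2 (s.2 + 1) := by
  unfold dnfStep; split_ifs <;> simp

/-- The bin into which DNF, started in state `s`, puts item `i`: its number of covered bins
when that item arrives. -/
noncomputable def dnfBin : ℝ × ℕ → (I : List ℝ) → Fin I.length → ℕ
  | _, [] => Fin.elim0
  | s, x :: I => Fin.cons s.2 (dnfBin (dnfStep s x) I)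

lemma le_dnfBin (s : ℝ × ℕ) (I : List ℝ) (i : Fin I.length) : s.2 ≤ dnfBin s I i := by
  induction I generalizing s with
  | nil => exact i.elim0
  | cons x I ih =>
    refine Fin.cases le_rfl (fun i => ?_) i
    exact (dnfStep_snd_mem_Icc s x).1.trans (ih _ i)

lemma dnfBin_le (s : ℝ × ℕ) (I : List ℝ) (i : Fin I.length) : dnfBin s I i ≤ s.2 + i := by
  induction I generalizing s with
  | nil => exact i.elim0
  | cons x I ih =>
    refine Fin.cases (Nat.le_add_right _ _) (fun i => ?_) i
    have := (dnfStep_snd_mem_Icc s x).2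
    have := ih (dnfStep s x) i
    simp only [dnfBin, Fin.cons_succ, Fin.val_succ]
    omega

/-- The `s.1` term is the content the open bin already holds in state `s`. -/
lemma one_le_dnfBin_content (s : ℝ × ℕ) (I : List ℝ) (b : ℕ) (hsb : s.2 ≤ b)
    (hb : b < (I.foldl dnfStep s).2) :
    1 ≤ (if b = s.2 then s.1 else 0) + ∑ i, if dnfBin s I i = b then I.get i else 0 := by
  induction I generalizing s with
  | nil => exact absurd hb (by simpa using hsb)
  | cons x I ih =>
    show 1 ≤ _ + ∑ i : Fin (I.length + 1), _
    rw [Fin.sum_univ_succ]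
    simp only [dnfBin, Fin.cons_zero, Fin.cons_succ, List.get_cons_zero]
    by_cases hclose : 1 ≤ s.1 + x
    · have hstep := dnfStep_of_one_le hclose
      rcases hsb.eq_or_lt with rfl | hlt
      · have hlater : ∀ i, dnfBin (dnfStep s x) I i ≠ s.2 := fun i =>
          ((le_dnfBin _ I i).trans_lt' (by simp [hstep])).ne'
        simpa [hlater] using hclose
      · have := ih (dnfStep s x) (by simpa [hstep] using hlt) hb
        simpa [hstep, hlt.ne, hlt.ne'] using this
    · have hstep := dnfStep_of_lt_one (not_le.mp hclose)
      have := ih (dnfStep s x) (by simpa [hstep] using hsb) hb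
      rw [hstep] at this ⊢
      rcases eq_or_ne b s.2 with rfl | hne
      · simp only [if_true, List.get_eq_getElem, Fin.val_succ, List.getElem_cons_succ] at this ⊢
        linarith
      · simpa [hne, hne.symm] using this

lemma dnfCount_le_optCount (I : List ℝ) : dnfCount I ≤ optCount I :=
  le_optCount_of_covers (dnfBin (0, 0) I) (fun i => (dnfBin_le _ I i).trans_lt (by simp))
    (dnfCount I) fun b hb => by
      simpa using one_le_dnfBin_content (0, 0) I b (Nat.zero_le b) hb

lemma foldl_dnfStep_invariant {I : List ℝ} (hI : ∀ x ∈ I, x < 1) {s : ℝ × ℕ} (hs : s.1 < 1) :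
    (I.foldl dnfStep s).1 < 1 ∧
      I.sum + s.1 + 2 * s.2 ≤ (I.foldl dnfStep s).1 + 2 * (I.foldl dnfStep s).2 := by
  induction I generalizing s with
  | nil => simpa using hs
  | cons x I ih =>
    have hx := hI x List.mem_cons_self
    have hI' := fun y hy => hI y (List.mem_cons_of_mem x hy)
    simp only [List.foldl_cons, List.sum_cons]
    rcases le_or_gt 1 (s.1 + x) with hclose | hopen
    · rw [dnfStep_of_one_le hclose]
      obtain ⟨hlt, hle⟩ := ih hI' (s := (0, s.2 + 1)) one_pos
      push_cast at hle
      exact ⟨hlt, by linarith⟩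
    · rw [dnfStep_of_lt_one hopen]
      obtain ⟨hlt, hle⟩ := ih hI' (s := (s.1 + x, s.2)) hopen
      exact ⟨hlt, by linarith⟩

lemma vol_le_two_mul_dnfCount_add_one {I : List ℝ} (hI : ∀ x ∈ I, x < 1) :
    vol I ≤ 2 * dnfCount I + 1 := by
  obtain ⟨hlt, hle⟩ := foldl_dnfStep_invariant hI (s := (0, 0)) one_pos
  simp only [add_zero, Nat.cast_zero, mul_zero] at hle
  unfold vol dnfCount
  linarith

end DualNextFit

section DualHarmonic

noncomputable def classCount (j : ℕ) (I : List ℝ) : ℕ :=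
  I.countP fun x => decide ((1:ℝ)/(j:ℝ) ≤ x ∧ x < 1/((j:ℝ)-1))

noncomputable def smallItems (k : ℕ) (I : List ℝ) : List ℝ :=
  I.filter fun x => decide (x < 1/(k:ℝ))

lemma dhCount_eq (k : ℕ) (I : List ℝ) :
    dhCount k I = ∑ j ∈ Icc 2 k, classCount j I / j + dnfCount (smallItems k I) := rfl

lemma exists_mem_harmonicClass {k : ℕ} (hk : 0 < k) {x : ℝ} (hx0 : 0 < x) (hx1 : x < 1)
    (hxk : 1 / (k:ℝ) ≤ x) : ∃ j ∈ Icc 2 k, 1 / (j:ℝ) ≤ x ∧ x < 1 / ((j:ℝ) - 1) := by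
  have hinv : 1 < 1 / x := by rwa [lt_div_iff₀ hx0, one_mul]
  have hj2 : 2 ≤ ⌈1 / x⌉₊ := Nat.lt_ceil.mpr (by exact_mod_cast hinv)
  have hj2R : (2:ℝ) ≤ ⌈1 / x⌉₊ := by exact_mod_cast hj2
  refine ⟨⌈1 / x⌉₊, mem_Icc.mpr ⟨hj2, ?_⟩, ?_, ?_⟩
  · rw [Nat.ceil_le, div_le_iff₀ hx0, ← div_le_iff₀' (by positivity)]
    exact hxk
  · rw [div_le_iff₀ (by positivity), ← div_le_iff₀' hx0]
    exact Nat.le_ceil _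
  · have hceil := Nat.ceil_lt_add_one (one_div_pos.mpr hx0).le
    rw [lt_div_iff₀ (by linarith), ← lt_div_iff₀' hx0]
    linarith

lemma le_small_add_sum_classWeight {k : ℕ} (hk : 0 < k) {x : ℝ} (hx0 : 0 < x) (hx1 : x < 1) :
    x ≤ (if x < 1 / (k:ℝ) then x else 0) +
      ∑ j ∈ Icc 2 k, if 1 / (j:ℝ) ≤ x ∧ x < 1 / ((j:ℝ) - 1) then 1 / ((j:ℝ) - 1) else 0 := by
  have hweight : ∀ j ∈ Icc 2 k,
      0 ≤ if 1 / (j:ℝ) ≤ x ∧ x < 1 / ((j:ℝ) - 1) then 1 / ((j:ℝ) - 1) else 0 := by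
    intro j hj
    have : (2:ℝ) ≤ j := by exact_mod_cast (mem_Icc.mp hj).1
    split_ifs <;> first | exact le_rfl | exact div_nonneg zero_le_one (by linarith)
  split_ifs with hsmall
  · linarith [sum_nonneg hweight]
  · obtain ⟨j, hj, hcls⟩ := exists_mem_harmonicClass hk hx0 hx1 (not_lt.mp hsmall)
    calc x ≤ if 1 / (j:ℝ) ≤ x ∧ x < 1 / ((j:ℝ) - 1) then 1 / ((j:ℝ) - 1) else 0 := by
          rw [if_pos hcls]; exact hcls.2.le
      _ ≤ _ := by rw [zero_add]; exact single_le_sum hweight hj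

lemma vol_le_sum_classCount_add_small {k : ℕ} (hk : 0 < k) {I : List ℝ}
    (hI : ∀ x ∈ I, 0 < x ∧ x < 1) :
    vol I ≤ ∑ j ∈ Icc 2 k, (classCount j I : ℝ) / ((j:ℝ) - 1) + vol (smallItems k I) := by
  induction I with
  | nil => simp [vol, smallItems, classCount]
  | cons x I ih =>
    obtain ⟨hx0, hx1⟩ := hI x List.mem_cons_self
    have hI' := ih fun y hy => hI y (List.mem_cons_of_mem x hy)
    have hx := le_small_add_sum_classWeight hk hx0 hx1
    have hcount : ∀ j ∈ Icc 2 k, (classCount j (x :: I) : ℝ) / ((j:ℝ) - 1) =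
        (classCount j I : ℝ) / ((j:ℝ) - 1) +
          if 1 / (j:ℝ) ≤ x ∧ x < 1 / ((j:ℝ) - 1) then 1 / ((j:ℝ) - 1) else 0 := by
      intro j _
      simp only [classCount, List.countP_cons, decide_eq_true_eq]
      split_ifs <;> push_cast <;> ring
    have hsmall : vol (smallItems k (x :: I)) =
        (if x < 1 / (k:ℝ) then x else 0) + vol (smallItems k I) := by
      simp only [smallItems, vol, List.filter_cons, decide_eq_true_eq]
      split_ifs <;> simp
    rw [sum_congr rfl hcount, sum_add_distrib, hsmall]
    simp only [vol, List.sum_cons] at hI' ⊢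
    linarith

lemma natCast_div_pred_le (m : ℕ) {j : ℕ} (hj : 2 ≤ j) :
    (m : ℝ) / ((j:ℝ) - 1) ≤ 2 * ((m / j : ℕ) : ℝ) + 1 := by
  have hjR : (2:ℝ) ≤ j := by exact_mod_cast hj
  have hrem : ((m % j : ℕ) : ℝ) + 1 ≤ j := by exact_mod_cast Nat.mod_lt m (by omega)
  have hm : (m : ℝ) = j * ((m / j : ℕ) : ℝ) + ((m % j : ℕ) : ℝ) := by
    exact_mod_cast (Nat.div_add_mod m j).symm
  rw [div_le_iff₀ (by linarith), hm]
  nlinarith [(Nat.cast_nonneg (m / j) : (0:ℝ) ≤ _)]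

lemma vol_le_two_mul_dhCount_add {k : ℕ} (hk : 2 ≤ k) {I : List ℝ}
    (hI : ∀ x ∈ I, 0 < x ∧ x < 1) : vol I ≤ 2 * dhCount k I + k := by
  have hsmall := vol_le_two_mul_dnfCount_add_one (I := smallItems k I)
    fun x hx => (hI x (List.mem_of_mem_filter hx)).2
  have hclasses : ∑ j ∈ Icc 2 k, (classCount j I : ℝ) / ((j:ℝ) - 1) ≤
      2 * ∑ j ∈ Icc 2 k, ((classCount j I / j : ℕ) : ℝ) + (k - 1) := by
    calc _ ≤ ∑ j ∈ Icc 2 k, (2 * ((classCount j I / j : ℕ) : ℝ) + 1) :=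
          sum_le_sum fun j hj => natCast_div_pred_le _ (mem_Icc.mp hj).1
      _ = _ := by
          rw [sum_add_distrib, ← mul_sum, sum_const, Nat.card_Icc, nsmul_one]
          push_cast [show k + 1 - 2 = k - 1 by omega, Nat.cast_sub (by omega : 1 ≤ k)]
          ring
  rw [dhCount_eq]
  push_cast
  linarith [vol_le_sum_classCount_add_small (by omega : 0 < k) hI]

lemma dhCount_replicate {k : ℕ} (hk : 2 ≤ k) (n : ℕ) {s : ℝ} (hs : 1 / 2 ≤ s) (hs1 : s < 1) :
    dhCount k (List.replicate n s) = n / 2 := by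
  have hkR : (2:ℝ) ≤ k := by exact_mod_cast hk
  have hnotsmall : ¬ s < 1 / (k:ℝ) := not_lt.mpr <|
    (one_div_le_one_div_of_le two_pos hkR).trans hs
  have hclass : ∀ j ∈ Icc 2 k, classCount j (List.replicate n s) / j = if j = 2 then n / 2 else 0 := by
    intro j hj
    simp only [classCount, List.countP_replicate, decide_eq_true_eq]
    rcases eq_or_ne j 2 with rfl | hj2
    · norm_num [hs, hs1]
    · have hj3 : (3:ℝ) ≤ j := by
        have := (mem_Icc.mp hj).1
        exact_mod_cast (by omega : 3 ≤ j)
      have : ¬ s < 1 / ((j:ℝ) - 1) := not_lt.mpr <|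
        (one_div_le_one_div_of_le two_pos (by linarith)).trans hs
      rw [if_neg fun h => this h.2, Nat.zero_div, if_neg hj2]
  have hsmall : smallItems k (List.replicate n s) = [] := by
    simp only [smallItems, List.filter_replicate, decide_eq_true_eq, if_neg hnotsmall]
  rw [dhCount_eq, sum_congr rfl hclass, sum_ite_eq', if_pos (mem_Icc.mpr ⟨le_rfl, hk⟩), hsmall]
  simp [dnfCount]

end DualHarmonic

lemma vol_le_two_mul_optCount_add_one {I : List ℝ} (hI : ∀ x ∈ I, x < 1) :
    vol I ≤ 2 * optCount I + 1 := by
  have : (dnfCount I : ℝ) ≤ optCount I := by exact_mod_cast dnfCount_le_optCount I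
  linarith [vol_le_two_mul_dnfCount_add_one hI]

lemma optCount_replicate_le (n : ℕ) {s : ℝ} (hs : s < 1) :
    optCount (List.replicate n s) ≤ n / 2 := by
  simpa using optCount_le_length_div_two fun x hx => (List.eq_of_mem_replicate hx).symm ▸ hs

section Rate

open Topology

noncomputable def infRate (S : Set ℝ) (A : List ℝ → ℕ) (v : ℝ) : ℝ :=
  sInf {r : ℝ | ∃ I : List ℝ, (∀ x ∈ I, x ∈ S) ∧ vol I = v ∧ r = (A I : ℝ) / v}

lemma minRate_eq_liminf_infRate (S : Set ℝ) (A : List ℝ → ℕ) :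
    minRate S A = liminf (infRate S A) atTop := rfl

lemma exists_replicate_vol_eq {v : ℝ} (hv : 2 ≤ v) :
    ∃ (n : ℕ) (s : ℝ), 1 / 2 ≤ s ∧ s < 1 ∧ vol (List.replicate n s) = v ∧ (n : ℝ) < v + 2 := by
  have hceil := Nat.ceil_lt_add_one (show 0 ≤ v by linarith)
  have hle := Nat.le_ceil v
  have hn : (0:ℝ) < ⌈v⌉₊ + 1 := by linarith
  refine ⟨⌈v⌉₊ + 1, v / (⌈v⌉₊ + 1), ?_, ?_, ?_, ?_⟩
  · rw [le_div_iff₀ (by exact_mod_cast hn)]; linarith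
  · rw [div_lt_one (by exact_mod_cast hn)]; linarith
  · rw [vol, List.sum_replicate, nsmul_eq_mul]; push_cast; field_simp
  · push_cast; linarith

lemma infRate_mem_Icc {A : List ℝ → ℕ} {c : ℝ}
    (hlow : ∀ I : List ℝ, (∀ x ∈ I, x ∈ Set.Ioo 0 1) → vol I ≤ 2 * A I + c)
    (hup : ∀ (n : ℕ) (s : ℝ), 1 / 2 ≤ s → s < 1 → A (List.replicate n s) ≤ n / 2)
    {v : ℝ} (hv : 2 ≤ v) :
    infRate (Set.Ioo 0 1) A v ∈ Set.Icc ((v - c) / (2 * v)) ((v + 2) / (2 * v)) := by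
  have hv0 : 0 < v := by linarith
  obtain ⟨n, s, hs, hs1, hvol, hn⟩ := exists_replicate_vol_eq hv
  have hlower : ∀ r ∈ {r : ℝ | ∃ I : List ℝ, (∀ x ∈ I, x ∈ Set.Ioo 0 1) ∧ vol I = v ∧
      r = (A I : ℝ) / v}, (v - c) / (2 * v) ≤ r := by
    rintro r ⟨I, hI, rfl, rfl⟩
    rw [div_le_div_iff₀ (by positivity) hv0]
    nlinarith [hlow I hI]
  have hmem : ((A (List.replicate n s) : ℕ) : ℝ) / v ∈ {r : ℝ | ∃ I : List ℝ,
      (∀ x ∈ I, x ∈ Set.Ioo 0 1) ∧ vol I = v ∧ r = (A I : ℝ) / v} :=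
    ⟨_, fun x hx => (List.eq_of_mem_replicate hx) ▸ ⟨by linarith, hs1⟩, hvol, rfl⟩
  refine ⟨le_csInf ⟨_, hmem⟩ hlower, (csInf_le ⟨_, hlower⟩ hmem).trans ?_⟩
  have hA : (A (List.replicate n s) : ℝ) ≤ n / 2 :=
    (Nat.cast_le.mpr (hup n s hs hs1)).trans (Nat.cast_div_le (n := 2))
  rw [div_le_div_iff₀ hv0 (by positivity)]
  nlinarith

lemma tendsto_add_div_two_mul_atTop (d : ℝ) :
    Tendsto (fun v : ℝ => (v + d) / (2 * v)) atTop (𝓝 (1 / 2)) := by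
  have h : Tendsto (fun v : ℝ => 1 / 2 + d / 2 * v⁻¹) atTop (𝓝 (1 / 2 + d / 2 * 0)) :=
    tendsto_const_nhds.add (tendsto_inv_atTop_zero.const_mul _)
  rw [mul_zero, add_zero] at h
  refine h.congr' ?_
  filter_upwards [eventually_gt_atTop 0] with v hv
  field_simp

lemma minRate_eq_half {A : List ℝ → ℕ} {c : ℝ}
    (hlow : ∀ I : List ℝ, (∀ x ∈ I, x ∈ Set.Ioo 0 1) → vol I ≤ 2 * A I + c)
    (hup : ∀ (n : ℕ) (s : ℝ), 1 / 2 ≤ s → s < 1 → A (List.replicate n s) ≤ n / 2) :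
    minRate (Set.Ioo 0 1) A = 1 / 2 := by
  have hlim : Tendsto (infRate (Set.Ioo 0 1) A) atTop (𝓝 (1 / 2)) := by
    refine tendsto_of_tendsto_of_tendsto_of_le_of_le'
      (by simpa only [sub_eq_add_neg] using tendsto_add_div_two_mul_atTop (-c))
      (tendsto_add_div_two_mul_atTop 2) ?_ ?_ <;>
    filter_upwards [eventually_ge_atTop 2] with v hv
    exacts [(infRate_mem_Icc hlow hup hv).1, (infRate_mem_Icc hlow hup hv).2]
  rw [minRate_eq_liminf_infRate, hlim.liminf_eq]

end Rate

/-- Both DNF and `DH_k` (for every `k ≥ 2`) have min/min ratio 1; in particular,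
`liminf_{v→∞} inf{DNF(I)/v : vol I = v} = liminf_{v→∞} inf{DH_k(I)/v : vol I = v}
 = liminf_{v→∞} inf{Opt(I)/v : vol I = v} = 1/2`. -/
theorem minmin_general (k : ℕ) (hk : 2 ≤ k) :
    minRate (Set.Ioo 0 1) dnfCount = 1/2 ∧
    minRate (Set.Ioo 0 1) (dhCount k) = 1/2 ∧
    minRate (Set.Ioo 0 1) optCount = 1/2 ∧
    minRate (Set.Ioo 0 1) dnfCount / minRate (Set.Ioo 0 1) optCount = 1 ∧
    minRate (Set.Ioo 0 1) (dhCount k) / minRate (Set.Ioo 0 1) optCount = 1 := by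
  have hdnf : minRate (Set.Ioo 0 1) dnfCount = 1 / 2 :=
    minRate_eq_half (fun _ hI => vol_le_two_mul_dnfCount_add_one fun x hx => (hI x hx).2)
      fun n _ _ hs1 => (dnfCount_le_optCount _).trans (optCount_replicate_le n hs1)
  have hdh : minRate (Set.Ioo 0 1) (dhCount k) = 1 / 2 :=
    minRate_eq_half (fun _ hI => vol_le_two_mul_dhCount_add hk hI)
      fun n _ hs hs1 => (dhCount_replicate hk n hs hs1).le
  have hopt : minRate (Set.Ioo 0 1) optCount = 1 / 2 :=
    minRate_eq_half (fun _ hI => vol_le_two_mul_optCount_add_one fun x hx => (hI x hx).2)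
      fun n _ _ hs1 => optCount_replicate_le n hs1
  refine ⟨hdnf, hdh, hopt, ?_, ?_⟩ <;> norm_num [hdnf, hdh, hopt]
end

section
/- Let (a,b) ⊆ (0,1) be an interval containing at least one point of the form 1/l with integer l ≥ 2, let 1/p = max{1/l : l ∈ ℕ, 1/l < b} be the maximal such partitioning point in (a,b), assume a < 1/p, and let k ≥ p. Then DH_k restricted to input sequences with all item sizes in (a,b) has min/min ratio 1. -/
open Filter MeasureTheory

/-!
Both min rates equal `1 / M` with `M = max (p * b) (1 + 1 / p)`; the assumption that `1 / p` is
the largest point `1 / l` below `b` says `b ≤ 1 / (p - 1)`, so every item lies in a class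
`[1 / j, 1 / (j - 1))` with `j ≥ p`.

Lower bounds: a class-`j` bin of `DH_k` holds `j` items, with content below `p * b` for `j = p`
and below `j / (j - 1) ≤ 1 + 1 / p` for `j > p`, and a Next-Fit bin of items below `1 / k`
overshoots 1 by less than `1 / k`; hence `vol I ≤ M * DH_k(I) + O(k)`. For `Opt`, Dual Next-Fit on
the items sorted non-increasingly covers at most `Opt(I)` bins, and each covered bin is closed
either by an item below `1 / p` or after at most `p` items, so again its content is at most `M`.

Upper bounds: `n` equal items of a size just below `b` (if `M = p * b`) or just below `1 / p`
(if `M = 1 + 1 / p`) make both `DH_k` and `Opt` use `p`, resp. `p + 1`, items per covered bin.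
-/

open Set

theorem dnfCount_mul_le_length {L : List ℝ} {s : ℝ} {q : ℕ} (hL : ∀ x ∈ L, x ≤ s)
    (hq : q * s < 1) : dnfCount L * (q + 1) ≤ L.length := by
  suffices key : ∀ (L : List ℝ) (ℓ : ℝ) (c j : ℕ), (∀ x ∈ L, x ≤ s) → ℓ ≤ j * s →
      (L.foldl dnfStep (ℓ, c)).2 * (q + 1) ≤ c * (q + 1) + j + L.length by
    simpa [dnfCount] using key L 0 0 0 hL (by simp)
  intro L
  induction L with
  | nil => simp
  | cons x L ih =>
    intro ℓ c j hL hℓ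
    have hx := hL x List.mem_cons_self
    have hL' : ∀ y ∈ L, y ≤ s := fun y hy => hL y (List.mem_cons_of_mem _ hy)
    simp only [List.foldl_cons, dnfStep, List.length_cons]
    split_ifs with hc
    · -- a bin holding `j + 1` items of size at most `s` is covered only if `j + 1 > q`
      have hqj : q ≤ j := by
        by_contra! hjq
        have : ((j : ℝ) + 1) ≤ q := by exact_mod_cast hjq
        nlinarith
      have := ih 0 (c + 1) 0 hL' (by simp)
      nlinarith
    · have := ih (ℓ + x) c (j + 1) hL' (by push_cast; linarith)
      omega

theorem sum_le_mul_dnfCount_add_one {L : List ℝ} {δ : ℝ} (hL : ∀ x ∈ L, x ≤ δ) :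
    L.sum ≤ (1 + δ) * dnfCount L + 1 := by
  suffices key : ∀ (L : List ℝ) (ℓ : ℝ) (c : ℕ), (∀ x ∈ L, x ≤ δ) → ℓ < 1 →
      (L.foldl dnfStep (ℓ, c)).1 < 1 ∧
      L.sum + ℓ + (1 + δ) * c ≤
        (L.foldl dnfStep (ℓ, c)).1 + (1 + δ) * (L.foldl dnfStep (ℓ, c)).2 by
    obtain ⟨h1, h2⟩ := key L 0 0 hL one_pos
    simp only [dnfCount]
    push_cast at h2
    linarith
  intro L
  induction L with
  | nil => intro ℓ c _ h; simpa using h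
  | cons x L ih =>
    intro ℓ c hL hℓ
    have hx := hL x List.mem_cons_self
    have hL' : ∀ y ∈ L, y ≤ δ := fun y hy => hL y (List.mem_cons_of_mem _ hy)
    simp only [List.foldl_cons, List.sum_cons, dnfStep]
    split_ifs with hc
    · obtain ⟨h1, h2⟩ := ih 0 (c + 1) hL' one_pos
      push_cast at h2
      exact ⟨h1, by linarith⟩
    · obtain ⟨h1, h2⟩ := ih (ℓ + x) c hL' (not_le.1 hc)
      exact ⟨h1, by linarith⟩

/-- On a non-increasing list of items below `b`, a bin closed by Dual Next-Fit either is closed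
by an item below `1/p` (content `< 1 + 1/p`) or holds at most `p` items (content `< p * b`). -/
theorem sum_le_mul_dnfCount_add_one_of_antitone {L : List ℝ} {b M : ℝ} {p : ℕ} (hp : 0 < p)
    (hM1 : 1 + 1 / (p : ℝ) ≤ M) (hM2 : p * b ≤ M) (hL : L.Pairwise (· ≥ ·))
    (hLb : ∀ x ∈ L, x < b) : L.sum ≤ M * dnfCount L + 1 := by
  suffices key : ∀ (L : List ℝ) (ℓ : ℝ) (c m : ℕ), L.Pairwise (· ≥ ·) → (∀ x ∈ L, x < b) →
      ℓ < 1 → ℓ ≤ m * b → (∀ y ∈ L, m * y ≤ ℓ) →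
      L.sum + ℓ + M * c ≤ 1 + M * (L.foldl dnfStep (ℓ, c)).2 by
    simpa [dnfCount, add_comm] using key L 0 0 0 hL hLb one_pos (by simp) (by simp)
  have hp0 : (0 : ℝ) < p := Nat.cast_pos.2 hp
  intro L
  induction L with
  | nil => intro ℓ c m _ _ hℓ _ _; simpa using hℓ.le
  | cons x L ih =>
    intro ℓ c m hL hLb hℓ hℓm hmy
    obtain ⟨hxL, hL'⟩ := List.pairwise_cons.1 hL
    have hxb := hLb x List.mem_cons_self
    have hLb' : ∀ y ∈ L, y < b := fun y hy => hLb y (List.mem_cons_of_mem _ hy)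
    have hmx := hmy x List.mem_cons_self
    simp only [List.foldl_cons, List.sum_cons, dnfStep]
    split_ifs with hc
    · have hclose : ℓ + x ≤ M := by
        by_cases hxp : x < 1 / p
        · linarith
        · have hmp : (m : ℝ) + 1 ≤ p := by
            have : (m : ℝ) < p := by
              by_contra! hpm
              have : (1 : ℝ) ≤ m * x := by
                calc (1 : ℝ) = p * (1 / p) := by field_simp
                  _ ≤ m * x := mul_le_mul hpm (not_lt.1 hxp) (by positivity) (by positivity)
              linarith
            exact_mod_cast Nat.add_one_le_iff.2 (by exact_mod_cast this)
          have hb0 : 0 < b := lt_of_lt_of_le (by positivity) ((not_lt.1 hxp).trans hxb.le)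
          nlinarith
      have := ih 0 (c + 1) 0 hL' hLb' one_pos (by simp) (by simp)
      push_cast at this
      linarith
    · have := ih (ℓ + x) c (m + 1) hL' hLb' (not_le.1 hc) (by push_cast; linarith)
        (fun y hy => by
          have := hmy y (List.mem_cons_of_mem _ hy)
          have := hxL y hy
          push_cast
          nlinarith)
      linarith

noncomputable def dnfState (J : List ℝ) (t : ℕ) : ℝ × ℕ := (J.take t).foldl dnfStep (0, 0)

/-- Dual Next-Fit puts item `r` of `J` into bin number `(dnfState J r).2`, the number of bins
covered before it arrives. -/
noncomputable def dnfBinContent (J : List ℝ) (t c : ℕ) : ℝ :=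
  ∑ r ∈ Finset.range t, if (dnfState J r).2 = c then J.getD r 0 else 0

theorem dnfState_succ {J : List ℝ} {t : ℕ} (ht : t < J.length) :
    dnfState J (t + 1) = dnfStep (dnfState J t) (J.getD t 0) := by
  rw [dnfState, dnfState, List.take_add_one, List.foldl_append, List.getD_eq_getElem _ _ ht,
    List.getElem?_eq_getElem ht]
  rfl

theorem dnfState_snd_mono (J : List ℝ) : Monotone fun t => (dnfState J t).2 := by
  refine monotone_nat_of_le_succ fun t => ?_
  by_cases ht : t < J.length
  · simp only [dnfState_succ ht, dnfStep]
    split_ifs <;> simp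
  · simp [dnfState, List.take_of_length_le (not_lt.1 ht),
      List.take_of_length_le (Nat.le_succ_of_le (not_lt.1 ht))]

theorem dnfBinContent_invariant (J : List ℝ) {t : ℕ} (ht : t ≤ J.length) :
    (∀ c < (dnfState J t).2, 1 ≤ dnfBinContent J t c) ∧
      dnfBinContent J t (dnfState J t).2 = (dnfState J t).1 := by
  induction t with
  | zero => simp [dnfState, dnfBinContent]
  | succ t ih =>
    obtain ⟨hclosed, hopen⟩ := ih (Nat.le_of_succ_le ht)
    have hsum : ∀ c, dnfBinContent J (t + 1) c =
        dnfBinContent J t c + if (dnfState J t).2 = c then J.getD t 0 else 0 :=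
      fun c => Finset.sum_range_succ _ _
    rw [dnfState_succ ht]
    simp only [dnfStep]
    split_ifs with hc
    · refine ⟨fun c hc' => ?_, ?_⟩
      · rcases Nat.lt_succ_iff_lt_or_eq.1 hc' with hlt | rfl
        · rw [hsum, if_neg hlt.ne']
          linarith [hclosed c hlt]
        · rw [hsum, if_pos rfl, hopen]
          exact hc
      · refine Finset.sum_eq_zero fun r hr => if_neg ?_
        have := dnfState_snd_mono J (Nat.le_of_lt_succ (Finset.mem_range.1 hr))
        simp only at this
        omega
    · refine ⟨fun c hc' => ?_, ?_⟩
      · rw [hsum, if_neg hc'.ne']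
        linarith [hclosed c hc']
      · rw [hsum, if_pos rfl, hopen]

theorem one_le_dnfBinContent {J : List ℝ} {c : ℕ} (hc : c < dnfCount J) :
    1 ≤ dnfBinContent J J.length c :=
  (dnfBinContent_invariant J le_rfl).1 c (by simpa [dnfState, dnfCount] using hc)

theorem optCount_mul_le_length {I : List ℝ} {m : ℕ}
    (h : ∀ T : Finset (Fin I.length), 1 ≤ ∑ i ∈ T, I.get i → m ≤ T.card) :
    optCount I * m ≤ I.length := by
  classical
  obtain ⟨f, -, hf⟩ := Finset.exists_mem_eq_sup Finset.univ ⟨id, Finset.mem_univ _⟩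
    fun f : Fin I.length → Fin I.length => (Finset.univ.filter fun b =>
      1 ≤ ∑ i ∈ Finset.univ.filter (fun i => f i = b), I.get i).card
  rw [optCount, hf, ← smul_eq_mul]
  calc _ ≤ ∑ b ∈ Finset.univ.filter (fun b =>
          1 ≤ ∑ i ∈ Finset.univ.filter (fun i => f i = b), I.get i),
            (Finset.univ.filter fun i => f i = b).card :=
        Finset.card_nsmul_le_sum _ _ _ fun b hb => h _ (Finset.mem_filter.1 hb).2
    _ ≤ ∑ b, (Finset.univ.filter fun i => f i = b).card :=
        Finset.sum_le_sum_of_subset (Finset.filter_subset _ _)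
    _ = I.length := by
        rw [← Finset.card_eq_sum_card_fiberwise (fun i _ => Finset.mem_univ (f i))]
        simp

theorem optCount_replicate_mul_le {s : ℝ} {m : ℕ} (hs : (m - 1 : ℝ) * s < 1) (n : ℕ) :
    optCount (List.replicate n s) * m ≤ n := by
  simpa using optCount_mul_le_length (I := List.replicate n s) fun T hT => by
    simp only [List.get_eq_getElem, List.getElem_replicate, Finset.sum_const, nsmul_eq_mul] at hT
    by_contra! hTm
    have : (T.card : ℝ) ≤ m - 1 := by
      have : T.card + 1 ≤ m := hTm
      have : (T.card : ℝ) + 1 ≤ m := by exact_mod_cast this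
      linarith
    have hs0 : 0 < s := pos_of_mul_pos_right (one_pos.trans_le hT) (Nat.cast_nonneg _)
    nlinarith

theorem le_optCount_of_labeling {I : List ℝ} (hI : ∀ x ∈ I, 0 ≤ x) (g : Fin I.length → ℕ)
    {t : ℕ} (hg : ∀ c < t, 1 ≤ ∑ i ∈ Finset.univ.filter (fun i => g i = c), I.get i) :
    t ≤ optCount I := by
  classical
  have hne : ∀ c : Fin t, ∃ i, g i = c := fun c => by
    by_contra! h
    have := hg c c.2
    rw [Finset.filter_false_of_mem fun i _ => h i, Finset.sum_empty] at this
    linarith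
  choose rep hrep using hne
  have hinj : Function.Injective rep := fun c c' h => Fin.ext (by rw [← hrep c, ← hrep c', h])
  -- bin `rep c` receives the items labelled `c`; unlabelled items stay in their own bins
  let f : Fin I.length → Fin I.length := fun i => if h : g i < t then rep ⟨g i, h⟩ else i
  have hcov : ∀ c, 1 ≤ ∑ i ∈ Finset.univ.filter (fun i => f i = rep c), I.get i := fun c =>
    (hg c c.2).trans <| Finset.sum_le_sum_of_subset_of_nonneg
      (fun i hi => by
        have hgi : g i = c := (Finset.mem_filter.1 hi).2
        simp [f, hgi])
      fun i _ _ => hI _ (List.get_mem _ _)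
  calc t = (Finset.univ.image rep).card := by
        rw [Finset.card_image_of_injective _ hinj, Finset.card_univ, Fintype.card_fin]
    _ ≤ (Finset.univ.filter fun b =>
          1 ≤ ∑ i ∈ Finset.univ.filter (fun i => f i = b), I.get i).card :=
        Finset.card_le_card fun b hb => by
          obtain ⟨c, -, rfl⟩ := Finset.mem_image.1 hb
          exact Finset.mem_filter.2 ⟨Finset.mem_univ _, hcov c⟩
    _ ≤ optCount I := Finset.le_sup (f := fun f : Fin I.length → Fin I.length =>
          (Finset.univ.filter fun b =>
            1 ≤ ∑ i ∈ Finset.univ.filter (fun i => f i = b), I.get i).card)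
          (Finset.mem_univ f)

theorem sum_le_mul_optCount_add_one {I : List ℝ} {b M : ℝ} {p : ℕ} (hp : 0 < p)
    (hM1 : 1 + 1 / (p : ℝ) ≤ M) (hM2 : p * b ≤ M) (hI : ∀ x ∈ I, x ∈ Ioo 0 b) :
    I.sum ≤ M * optCount I + 1 := by
  classical
  set σ := Tuple.sort fun i => -I.get i
  set J := List.ofFn fun r => I.get (σ r)
  have hJlen : J.length = I.length := List.length_ofFn
  have hJget : ∀ r : Fin I.length, J.getD r 0 = I.get (σ r) := fun r => by simp [J]
  have hJanti : J.Pairwise (· ≥ ·) := List.pairwise_ofFn.2 fun r s hrs =>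
    neg_le_neg_iff.1 (Tuple.monotone_sort (fun i => -I.get i) hrs.le)
  have hJb : ∀ x ∈ J, x < b := by
    simp only [J, List.mem_ofFn]
    rintro _ ⟨r, rfl⟩
    exact (hI _ (List.get_mem _ _)).2
  have hJsum : J.sum = I.sum := by
    rw [List.sum_ofFn, Equiv.sum_comp σ (fun i => I.get i), ← List.sum_ofFn, List.ofFn_get]
  -- label each item by the Dual Next-Fit bin it reaches in the sorted order
  have hopt : dnfCount J ≤ optCount I := by
    refine le_optCount_of_labeling (fun x hx => (hI x hx).1.le)
      (fun i => (dnfState J (σ.symm i)).2) fun c hc => ?_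
    convert one_le_dnfBinContent hc using 1
    rw [Finset.sum_filter, ← Equiv.sum_comp σ, dnfBinContent, hJlen, Finset.sum_range]
    exact Finset.sum_congr rfl fun r _ => by simp only [Equiv.symm_apply_apply, hJget]
  have hM0 : 0 ≤ M := le_trans (by positivity) hM1
  calc I.sum = J.sum := hJsum.symm
    _ ≤ M * dnfCount J + 1 := sum_le_mul_dnfCount_add_one_of_antitone hp hM1 hM2 hJanti hJb
    _ ≤ M * optCount I + 1 := by gcongr

theorem Nat.ceil_one_div_eq_of_mem_Ico {j : ℕ} {x : ℝ}
    (h : x ∈ Ico (1 / (j : ℝ)) (1 / ((j : ℝ) - 1))) : ⌈1 / x⌉₊ = j := by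
  obtain ⟨h1, h2⟩ := h
  have hj : 2 ≤ j := by
    by_contra! hj
    interval_cases j <;> norm_num at h1 h2 <;> linarith
  have hj1 : (1 : ℝ) < j := by exact_mod_cast hj
  have hx : 0 < x := lt_of_lt_of_le (by positivity) h1
  rw [Nat.ceil_eq_iff (by omega), Nat.cast_sub (by omega), Nat.cast_one]
  constructor
  · rwa [lt_div_iff₀ hx, ← lt_div_iff₀' (by linarith)]
  · rwa [div_le_iff₀ hx, ← div_le_iff₀' (by linarith)]

theorem dhCount_replicate_of_mem_Ico {k j : ℕ} {s : ℝ} (hj : j ∈ Finset.Icc 2 k)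
    (hs : s ∈ Ico (1 / (j : ℝ)) (1 / ((j : ℝ) - 1))) (n : ℕ) :
    dhCount k (List.replicate n s) = n / j := by
  obtain ⟨hj2, hjk⟩ := Finset.mem_Icc.1 hj
  have hsk : ¬ s < 1 / k := not_lt.2 <| le_trans
    (one_div_le_one_div_of_le (by positivity) (by exact_mod_cast hjk)) hs.1
  rw [dhCount, Finset.sum_eq_single j]
  · rw [List.filter_replicate, if_neg (by simpa using hsk), List.countP_replicate,
      if_pos (decide_eq_true (Set.mem_Ico.1 hs))]
    rfl
  · intro i _ hij
    have : ¬ s ∈ Ico (1 / (i : ℝ)) (1 / ((i : ℝ) - 1)) := fun hi =>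
      hij ((Nat.ceil_one_div_eq_of_mem_Ico hi).symm.trans (Nat.ceil_one_div_eq_of_mem_Ico hs))
    rw [List.countP_replicate, if_neg (decide_eq_true_iff.not.2 (Set.mem_Ico.not.1 this)),
      Nat.zero_div]
  · exact fun h => absurd hj h

theorem dhCount_replicate_of_lt {k : ℕ} {s : ℝ} (hs : s < 1 / k) (n : ℕ) :
    dhCount k (List.replicate n s) = dnfCount (List.replicate n s) := by
  rw [dhCount, Finset.sum_eq_zero fun j hj => ?_, List.filter_replicate,
    if_pos (decide_eq_true hs), zero_add]
  obtain ⟨hj2, hjk⟩ := Finset.mem_Icc.1 hj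
  have : ¬ s ∈ Ico (1 / (j : ℝ)) (1 / ((j : ℝ) - 1)) := fun h => not_le.2 hs <|
    (one_div_le_one_div_of_le (by positivity) (by exact_mod_cast hjk)).trans h.1
  rw [List.countP_replicate, if_neg (decide_eq_true_iff.not.2 (Set.mem_Ico.not.1 this)),
    Nat.zero_div]

theorem exists_mem_Icc_mem_Ico_mul_le {k p : ℕ} {M b x : ℝ} (hp : 2 ≤ p) (hk : p ≤ k)
    (hM1 : 1 + 1 / (p : ℝ) ≤ M) (hM2 : p * b ≤ M) (hb : b ≤ 1 / ((p : ℝ) - 1))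
    (hx : x ∈ Ioo 0 b) (hxk : 1 / (k : ℝ) ≤ x) :
    ∃ j ∈ Finset.Icc 2 k, x ∈ Ico (1 / (j : ℝ)) (1 / ((j : ℝ) - 1)) ∧ j * x ≤ M := by
  obtain ⟨hx0, hxb⟩ := hx
  have hp1 : (1 : ℝ) < p := by exact_mod_cast hp
  set j := ⌈1 / x⌉₊
  have hle : 1 / x ≤ j := Nat.le_ceil _
  have hlt : (j : ℝ) < 1 / x + 1 := Nat.ceil_lt_add_one (by positivity)
  have hpx : (p : ℝ) - 1 < 1 / x := by
    rw [lt_div_iff₀ hx0]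
    have := (lt_div_iff₀ (by linarith)).1 (hxb.trans_le hb)
    linarith
  have hpj : p ≤ j := by
    have : (p : ℝ) < j + 1 := by linarith
    exact Nat.lt_succ_iff.1 (by exact_mod_cast this)
  have hjk : j ≤ k :=
    Nat.ceil_le.2 (by rwa [div_le_iff₀ hx0, ← div_le_iff₀' (Nat.cast_pos.2 (by omega))])
  have hj1 : (1 : ℝ) < j := by exact_mod_cast hp.trans hpj
  have hclass : x ∈ Ico (1 / (j : ℝ)) (1 / ((j : ℝ) - 1)) := by
    constructor
    · rwa [div_le_iff₀ (by linarith), ← div_le_iff₀' hx0]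
    · rw [lt_div_iff₀ (by linarith), ← lt_div_iff₀' hx0]
      linarith
  refine ⟨j, Finset.mem_Icc.2 ⟨hp.trans hpj, hjk⟩, hclass, ?_⟩
  have hjx : j * x < 1 + x := by
    have := mul_lt_mul_of_pos_right hlt hx0
    rwa [add_mul, one_div_mul_cancel hx0.ne', one_mul] at this
  rcases hpj.eq_or_lt with rfl | hpj
  · nlinarith
  · have hpj' : (p : ℝ) + 1 ≤ j := by exact_mod_cast hpj
    have : x < 1 / p := hclass.2.trans_le (one_div_le_one_div_of_le (by linarith) (by linarith))
    linarith

theorem sum_le_sum_countP_add_sum_filter {k : ℕ} {M : ℝ} (hM : 0 ≤ M) {I : List ℝ}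
    (hI : ∀ x ∈ I, ¬ x < 1 / (k : ℝ) →
      ∃ j ∈ Finset.Icc 2 k, x ∈ Ico (1 / (j : ℝ)) (1 / ((j : ℝ) - 1)) ∧ j * x ≤ M) :
    I.sum ≤ ∑ j ∈ Finset.Icc 2 k,
        M / j * (I.countP fun x => decide (1 / (j : ℝ) ≤ x ∧ x < 1 / ((j : ℝ) - 1)))
      + (I.filter fun x => decide (x < 1 / (k : ℝ))).sum := by
  induction I with
  | nil => simp
  | cons x I ih =>
    have hx : x ≤ ∑ j ∈ Finset.Icc 2 k,
        M / j * (if 1 / (j : ℝ) ≤ x ∧ x < 1 / ((j : ℝ) - 1) then 1 else 0)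
          + if x < 1 / (k : ℝ) then x else 0 := by
      have hnonneg : ∀ j ∈ Finset.Icc 2 k,
          0 ≤ M / j * (if 1 / (j : ℝ) ≤ x ∧ x < 1 / ((j : ℝ) - 1) then 1 else 0) :=
        fun j _ => mul_nonneg (by positivity) (by split_ifs <;> norm_num)
      by_cases hxk : x < 1 / (k : ℝ)
      · rw [if_pos hxk]
        linarith [Finset.sum_nonneg hnonneg]
      · obtain ⟨j, hj, hxj, hjx⟩ := hI x List.mem_cons_self hxk
        have hj0 : (0 : ℝ) < j := by
          have := (Finset.mem_Icc.1 hj).1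
          positivity
        have := Finset.single_le_sum hnonneg hj
        rw [if_pos (Set.mem_Ico.1 hxj), mul_one] at this
        rw [if_neg hxk, add_zero]
        exact ((le_div_iff₀ hj0).2 (by linarith)).trans this
    have := ih fun y hy => hI y (List.mem_cons_of_mem _ hy)
    simp only [List.sum_cons, List.countP_cons, List.filter_cons]
    push_cast
    simp only [decide_eq_true_eq, mul_add, Finset.sum_add_distrib]
    split_ifs at hx ⊢
    · rw [List.sum_cons]
      linarith
    · linarith

theorem sum_le_mul_dhCount_add {k p : ℕ} {M b : ℝ} (hp : 2 ≤ p) (hk : p ≤ k)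
    (hM1 : 1 + 1 / (p : ℝ) ≤ M) (hM2 : p * b ≤ M) (hb : b ≤ 1 / ((p : ℝ) - 1)) {I : List ℝ}
    (hI : ∀ x ∈ I, x ∈ Ioo 0 b) : I.sum ≤ M * dhCount k I + (M * k + 1) := by
  have hM0 : 0 ≤ M := le_trans (by positivity) hM1
  set cnt : ℕ → ℕ := fun j => I.countP fun x => decide (1 / (j : ℝ) ≤ x ∧ x < 1 / ((j : ℝ) - 1))
  set small := I.filter fun x => decide (x < 1 / (k : ℝ))
  have hfloor : ∀ j ∈ Finset.Icc 2 k, M / j * cnt j ≤ M * (cnt j / j : ℕ) + M := by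
    intro j hj
    have hj0 : 0 < j := by have := (Finset.mem_Icc.1 hj).1; omega
    have : (cnt j : ℝ) ≤ j * (cnt j / j : ℕ) + j := by
      exact_mod_cast (Nat.lt_div_mul_add (a := cnt j) hj0).le.trans_eq (by ring)
    calc M / j * cnt j ≤ M / j * (j * (cnt j / j : ℕ) + j) := by gcongr
      _ = M * (cnt j / j : ℕ) + M := by field_simp
  have hsmall : small.sum ≤ M * dnfCount small + 1 := by
    have hkp : 1 / (k : ℝ) ≤ 1 / p :=
      one_div_le_one_div_of_le (by positivity) (by exact_mod_cast hk)
    refine (sum_le_mul_dnfCount_add_one (δ := 1 / k) fun x hx => ?_).trans ?_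
    · exact (of_decide_eq_true (List.mem_filter.1 hx).2).le
    · gcongr
      linarith
  have hcard : ((Finset.Icc 2 k).card : ℝ) ≤ k := by
    rw [Nat.card_Icc]
    exact_mod_cast Nat.sub_le_of_le_add (by omega)
  calc I.sum ≤ ∑ j ∈ Finset.Icc 2 k, M / j * cnt j + small.sum :=
        sum_le_sum_countP_add_sum_filter hM0 fun x hx hxk =>
          exists_mem_Icc_mem_Ico_mul_le hp hk hM1 hM2 hb (hI x hx) (not_lt.1 hxk)
    _ ≤ ∑ j ∈ Finset.Icc 2 k, (M * (cnt j / j : ℕ) + M) + (M * dnfCount small + 1) :=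
        add_le_add (Finset.sum_le_sum hfloor) hsmall
    _ = M * dhCount k I + (M * (Finset.Icc 2 k).card + 1) := by
        rw [dhCount, Finset.sum_add_distrib, ← Finset.mul_sum, Finset.sum_const, nsmul_eq_mul]
        push_cast
        ring
    _ ≤ M * dhCount k I + (M * k + 1) := by gcongr

theorem Filter.liminf_eq_of_eventually_ge_of_frequently_le {β : Type*} {l : Filter β}
    {f : β → ℝ} {r : ℝ}
    (hge : ∀ ε > 0, ∀ᶠ x in l, r - ε ≤ f x) (hle : ∀ ε > 0, ∃ᶠ x in l, f x ≤ r + ε) :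
    liminf f l = r := by
  have hbdd : IsBoundedUnder (· ≥ ·) l f := isBoundedUnder_of_eventually_ge (hge 1 one_pos)
  have hcobdd : IsCoboundedUnder (· ≥ ·) l f := IsCoboundedUnder.of_frequently_le (hle 1 one_pos)
  refine le_antisymm (le_of_forall_pos_le_add fun ε hε => ?_)
    (le_of_forall_pos_le_add fun ε hε => ?_)
  · exact liminf_le_of_frequently_le (hle ε hε) hbdd
  · linarith [le_liminf_of_le hcobdd (hge ε hε)]

theorem eventually_exists_div_mem_Ioo {lo hi : ℝ} (hlo : 0 < lo) (hlohi : lo < hi) :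
    ∀ᶠ v : ℝ in atTop, ∃ n : ℕ, v / n ∈ Ioo lo hi := by
  have hhi : 0 < hi := hlo.trans hlohi
  filter_upwards [eventually_gt_atTop (lo * hi / (hi - lo))] with v hv
  have hv0 : 0 < v := lt_trans (by have := sub_pos.2 hlohi; positivity) hv
  set n : ℕ := ⌊v / hi⌋₊ + 1
  have hn : v / hi < n := by simpa [n] using Nat.lt_floor_add_one (v / hi)
  have hn' : (n : ℝ) ≤ v / hi + 1 := by
    simpa [n] using Nat.floor_le (div_nonneg hv0.le hhi.le)
  have hn0 : (0 : ℝ) < n := lt_of_le_of_lt (by positivity) hn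
  refine ⟨n, ?_, ?_⟩
  · rw [lt_div_iff₀ hn0]
    rw [div_lt_iff₀ (sub_pos.2 hlohi)] at hv
    have : lo * (n : ℝ) ≤ lo * (v / hi + 1) := mul_le_mul_of_nonneg_left hn' hlo.le
    have : lo * (v / hi) * hi = lo * v := by field_simp
    nlinarith
  · rw [div_lt_iff₀ hn0, mul_comm]
    rwa [div_lt_iff₀ hhi] at hn

open Topology in
theorem minRate_eq_inv {S : Set ℝ} {A : List ℝ → ℕ} {M C lo hi : ℝ} {m : ℕ}
    (hlo : 0 < lo) (hlohi : lo < hi) (hS : Ioo lo hi ⊆ S) (hm : 0 < m) (hM : m * hi = M)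
    (hlow : ∀ I : List ℝ, (∀ x ∈ I, x ∈ S) → vol I ≤ M * A I + C)
    (hrep : ∀ s ∈ Ioo lo hi, ∀ n : ℕ, A (List.replicate n s) * m ≤ n) :
    minRate S A = M⁻¹ := by
  have hm0 : (0 : ℝ) < m := Nat.cast_pos.2 hm
  have hM0 : 0 < M := hM ▸ mul_pos hm0 (hlo.trans hlohi)
  set rates : ℝ → Set ℝ :=
    fun v => {r | ∃ I : List ℝ, (∀ x ∈ I, x ∈ S) ∧ vol I = v ∧ r = (A I : ℝ) / v}
  have hmem : ∀ s ∈ Ioo lo hi, ∀ n : ℕ,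
      (A (List.replicate n s) : ℝ) / (n * s) ∈ rates (n * s) := fun s hs n =>
    ⟨_, fun x hx => List.eq_of_mem_replicate hx ▸ hS hs, by simp [vol], rfl⟩
  have hbdd : ∀ v > 0, BddBelow (rates v) := fun v hv =>
    ⟨0, by rintro _ ⟨I, -, -, rfl⟩; positivity⟩
  apply liminf_eq_of_eventually_ge_of_frequently_le
  · intro ε hε
    filter_upwards [eventually_exists_div_mem_Ioo hlo hlohi, eventually_gt_atTop 0,
      eventually_ge_atTop (C / (M * ε))] with v ⟨n, hn⟩ hv0 hvC
    have hn0 : (n : ℝ) ≠ 0 := by rintro h; simp [h] at hn; linarith [hn.1]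
    refine le_csInf ⟨_, mul_div_cancel₀ v hn0 ▸ hmem _ hn n⟩ ?_
    rintro _ ⟨I, hI, rfl, rfl⟩
    have hCv : C ≤ vol I * (M * ε) := by rwa [div_le_iff₀ (by positivity)] at hvC
    rw [le_div_iff₀ hv0]
    have := hlow I hI
    have : M * (M⁻¹ * vol I) = vol I := by field_simp
    nlinarith
  · intro ε hε
    have hlim : Tendsto (fun s => ((m : ℝ) * s)⁻¹) (𝓝[<] hi) (𝓝 M⁻¹) := by
      rw [← hM]
      exact (((continuous_const.mul continuous_id).tendsto hi).inv₀
        (by simpa [hM] using hM0.ne')).mono_left nhdsWithin_le_nhds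
    obtain ⟨s, hsε, hs⟩ := ((hlim.eventually_lt_const (lt_add_of_pos_right _ hε)).and
      (Ioo_mem_nhdsLT hlohi)).exists
    have hs0 : 0 < s := hlo.trans hs.1
    rw [frequently_atTop]
    intro N
    obtain ⟨n, hn⟩ := exists_nat_gt (max N 0 / s)
    have hn0 : (0 : ℝ) < n := lt_of_le_of_lt (by positivity) hn
    have hN : N ≤ n * s := by
      rw [div_lt_iff₀ hs0] at hn
      linarith [le_max_left N 0]
    refine ⟨n * s, hN, (csInf_le (hbdd _ (by positivity)) (hmem s hs n)).trans ?_⟩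
    have hA : (A (List.replicate n s) : ℝ) * m ≤ n := by exact_mod_cast hrep s hs n
    calc (A (List.replicate n s) : ℝ) / (n * s) ≤ (n / m) / (n * s) := by
          gcongr
          rwa [le_div_iff₀ hm0]
      _ = ((m : ℝ) * s)⁻¹ := by field_simp
      _ ≤ M⁻¹ + ε := hsε.le

/-- Inputs of equal items of size just below `hi` force both `DH_k` and `Opt` to spend `m` items on
every covered bin, while the volume per bin tends to `m * hi = max (p * b) (1 + 1 / p)`. -/
theorem exists_Ioo_replicate_mul_le {a b : ℝ} {p k : ℕ} (hp : 2 ≤ p) (hk : p ≤ k)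
    (hap : a < 1 / p) (hpb : 1 / p < b) (hb : b ≤ 1 / ((p : ℝ) - 1)) :
    ∃ lo hi : ℝ, ∃ m : ℕ, 0 < lo ∧ lo < hi ∧ Ioo lo hi ⊆ Ioo a b ∧ 0 < m ∧
      m * hi = max (p * b) (1 + 1 / p) ∧ ∀ s ∈ Ioo lo hi, ∀ n : ℕ,
        dhCount k (List.replicate n s) * m ≤ n ∧ optCount (List.replicate n s) * m ≤ n := by
  have hp0 : (0 : ℝ) < p := by positivity
  have hp1 : (1 : ℝ) < p := by exact_mod_cast hp
  rcases le_total (1 + 1 / (p : ℝ)) (p * b) with hM | hM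
  · refine ⟨1 / p, b, p, by positivity, hpb, Ioo_subset_Ioo_left hap.le, by omega,
      (max_eq_left hM).symm, fun s hs n => ⟨?_, optCount_replicate_mul_le ?_ n⟩⟩
    · rw [dhCount_replicate_of_mem_Ico (Finset.mem_Icc.2 ⟨hp, hk⟩) ⟨hs.1.le, hs.2.trans_le hb⟩]
      exact Nat.div_mul_le_self n p
    · have := (lt_div_iff₀ (by linarith)).1 (hs.2.trans_le hb)
      linarith
  · have hlo : 0 < max a (1 / ((p : ℝ) + 1)) := lt_max_of_lt_right (by positivity)
    refine ⟨max a (1 / ((p : ℝ) + 1)), 1 / p, p + 1, hlo,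
      max_lt hap (one_div_lt_one_div_of_lt hp0 (by linarith)),
      fun s hs => ⟨(le_max_left _ _).trans_lt hs.1, hs.2.trans hpb⟩, by omega,
      by rw [max_eq_right hM]; push_cast; field_simp, fun s hs n => ?_⟩
    have hps : (p : ℝ) * s < 1 := by
      have := (lt_div_iff₀ hp0).1 hs.2
      linarith
    refine ⟨?_, optCount_replicate_mul_le (by push_cast; linarith) n⟩
    · by_cases hsk : s < 1 / k
      · rw [dhCount_replicate_of_lt hsk]
        simpa using dnfCount_mul_le_length (L := List.replicate n s)
          (fun x hx => (List.eq_of_mem_replicate hx).le) hps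
      · have hpk : p + 1 ≤ k := by
          by_contra! hkp
          have : (k : ℝ) ≤ p := by exact_mod_cast Nat.lt_succ_iff.1 hkp
          exact hsk (hs.2.trans_le (one_div_le_one_div_of_le (Nat.cast_pos.2 (by omega)) this))
        have hs' : s ∈ Ico (1 / ((p + 1 : ℕ) : ℝ)) (1 / (((p + 1 : ℕ) : ℝ) - 1)) := by
          push_cast
          exact ⟨((le_max_right _ _).trans_lt hs.1).le, by simpa using hs.2⟩
        rw [dhCount_replicate_of_mem_Ico (Finset.mem_Icc.2 ⟨by omega, hpk⟩) hs']
        exact Nat.div_mul_le_self n (p + 1)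

theorem dh_minmin_restricted_general (a b : ℝ) (p k : ℕ) (hp : 2 ≤ p)
    (hsub : Set.Ioo a b ⊆ Set.Ioo (0:ℝ) 1)
    (hpb : 1/(p:ℝ) < b)
    (hpmax : ∀ l : ℕ, 1 ≤ l → 1/(l:ℝ) < b → 1/(l:ℝ) ≤ 1/(p:ℝ))
    (hap : a < 1/(p:ℝ)) (hk : p ≤ k) :
    minRate (Set.Ioo a b) (dhCount k) / minRate (Set.Ioo a b) optCount = 1 := by
  have hp1 : (1 : ℝ) < p := by exact_mod_cast hp
  have hb : b ≤ 1 / ((p : ℝ) - 1) := by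
    by_contra! h
    have := hpmax (p - 1) (by omega) (by rwa [Nat.cast_sub (by omega), Nat.cast_one])
    rw [Nat.cast_sub (by omega), Nat.cast_one] at this
    linarith [one_div_lt_one_div_of_lt (by linarith) (by linarith : (p : ℝ) - 1 < p)]
  obtain ⟨lo, hi, m, hlo, hlohi, hsub', hm, hmhi, hrep⟩ :=
    exists_Ioo_replicate_mul_le hp hk hap hpb hb
  have hM1 : 1 + 1 / (p : ℝ) ≤ max (p * b) (1 + 1 / p) := le_max_right _ _
  have hM2 : p * b ≤ max (p * b) (1 + 1 / (p : ℝ)) := le_max_left _ _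
  have hitems : ∀ I : List ℝ, (∀ x ∈ I, x ∈ Ioo a b) → ∀ x ∈ I, x ∈ Ioo 0 b :=
    fun I hI x hx => ⟨(hsub (hI x hx)).1, (hI x hx).2⟩
  rw [minRate_eq_inv hlo hlohi hsub' hm hmhi
      (fun I hI => sum_le_mul_dhCount_add hp hk hM1 hM2 hb (hitems I hI))
      fun s hs n => (hrep s hs n).1,
    minRate_eq_inv hlo hlohi hsub' hm hmhi
      (fun I hI => sum_le_mul_optCount_add_one (by omega) hM1 hM2 (hitems I hI))
      fun s hs n => (hrep s hs n).2]
  exact div_self (inv_ne_zero (by positivity))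

/-- If `(a,b) ⊆ (0,1)` contains a point `1/l` (integer `l ≥ 2`), `1/p` is the
maximal point of the form `1/l` below `b`, `a < 1/p`, and `k ≥ p`, then `DH_k`
restricted to item sizes in `(a,b)` has min/min ratio 1. -/
theorem dh_minmin_restricted (a b : ℝ) (p k : ℕ) (hp : 2 ≤ p)
    (hsub : Set.Ioo a b ⊆ Set.Ioo (0:ℝ) 1)
    (hborder : ∃ l : ℕ, 2 ≤ l ∧ (1/(l:ℝ)) ∈ Set.Ioo a b)
    (hpb : 1/(p:ℝ) < b)
    (hpmax : ∀ l : ℕ, 1 ≤ l → 1/(l:ℝ) < b → 1/(l:ℝ) ≤ 1/(p:ℝ))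
    (hap : a < 1/(p:ℝ)) (hk : p ≤ k) :
    minRate (Set.Ioo a b) (dhCount k) / minRate (Set.Ioo a b) optCount = 1 :=
  dh_minmin_restricted_general a b p k hp hsub hpb hpmax hap hk
end
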